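/- arXiv:1308.3180 — 11 statements merged into one kernel-verified Lean document; each statement's English description precedes it below -/
import Mathlib

section
/- For every positive integer N there exists a nontrivial finite group G whose genus increment N_G equals N, where N_G = ε · ∏_{p | |G|} p^{n_p − e_p}, with G_p a Sylow p-subgroup of G of order p^{n_p} and exponent p^{e_p}, and ε = 1/2 if the Sylow 2-subgroup of G is nontrivial and is not of GK-type, and ε = 1 otherwise. -/
/-- A nontrivial finite `p`-group is of Gorenstein–Kulkarni type if the set of
its elements of non-maximal order forms a subgroup of index `p`. -/
def IsGKType (p : ℕ) (G : Type*) [Group G] : Prop :=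
  Finite G ∧ Nontrivial G ∧ IsPGroup p G ∧
    ∃ K : Subgroup G, ((K : Set G) = {y : G | orderOf y < Monoid.exponent G}) ∧
      K.index = p

/-!
The group `G = C_{2N} × C_N` works. For an abelian group the Sylow `p`-subgroup has order
`p ^ v_p |G|` and exponent `p ^ v_p (exp G)`, so the product in `N_G` is `|G| / exp G = N`.
With `a = v_2 N`, the Sylow `2`-subgroup is `C_{2^(a+1)} × C_{2^a}`; its elements of non-maximal
order are exactly its `2^a`-torsion, a subgroup of order `4^a` and hence of index `2`, so the
Sylow `2`-subgroup is of GK-type and `ε = 1`.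
-/

theorem Nat.prod_primeFactors_pow_sub_factorization {a b : ℕ} (hab : a ∣ b) (hb : b ≠ 0) :
    ∏ p ∈ b.primeFactors, p ^ (b.factorization p - a.factorization p) = b / a := by
  have hba : b / a ≠ 0 :=
    (Nat.div_ne_zero_iff_of_dvd hab).mpr ⟨hb, ne_zero_of_dvd_ne_zero hb hab⟩
  conv_rhs => rw [← Nat.prod_factorization_pow_eq_self hba]
  rw [Finsupp.prod_of_support_subset _ ?_ _ fun _ _ ↦ pow_zero _, Nat.factorization_div hab]
  · rfl
  · rw [Nat.support_factorization]
    exact Nat.primeFactors_mono (Nat.div_dvd_of_dvd hab) hb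

theorem Nat.dvd_prime_pow_iff_lt {p d k : ℕ} (hp : p.Prime) (hd : d ∣ p ^ (k + 1)) :
    d ∣ p ^ k ↔ d < p ^ (k + 1) := by
  obtain ⟨j, hj, rfl⟩ := (Nat.dvd_prime_pow hp).mp hd
  rw [Nat.pow_dvd_pow_iff_le_right hp.one_lt, Nat.pow_lt_pow_iff_right hp.one_lt]
  omega

namespace Sylow

variable {G : Type*} [CommGroup G] {p : ℕ}

theorem mem_of_orderOf_eq_pow (P : Sylow p G) {g : G} {k : ℕ} (hg : orderOf g = p ^ k) :
    g ∈ P :=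
  (IsPGroup.of_card ((Nat.card_zpowers g).trans hg)).le_sylow_of_normal P (Subgroup.mem_zpowers g)

variable [Fact p.Prime]

theorem ker_powMonoidHom_le (P : Sylow p G) (k : ℕ) :
    (powMonoidHom (p ^ k) : G →* G).ker ≤ P := fun _ hg ↦
  have ⟨_, _, hj⟩ := (Nat.dvd_prime_pow Fact.out).mp (orderOf_dvd_of_pow_eq_one hg)
  P.mem_of_orderOf_eq_pow hj

theorem card_ker_powMonoidHom (P : Sylow p G) (k : ℕ) :
    Nat.card (powMonoidHom (p ^ k) : P →* P).ker =
      Nat.card (powMonoidHom (p ^ k) : G →* G).ker := by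
  have hker : (powMonoidHom (p ^ k) : P →* P).ker =
      (powMonoidHom (p ^ k) : G →* G).ker.subgroupOf P := by
    ext y
    simp [Subgroup.mem_subgroupOf, Subtype.ext_iff]
  rw [hker, Nat.card_congr (Subgroup.subgroupOfEquivOfLe (P.ker_powMonoidHom_le k)).toEquiv]

theorem exponent_eq_pow_factorization [Finite G] (P : Sylow p G) :
    Monoid.exponent P = p ^ (Monoid.exponent G).factorization p := by
  have hp : p.Prime := Fact.out
  obtain ⟨m, hm⟩ := isPGroup_iff_exponent_eq_pow.mp P.isPGroup'
  obtain ⟨g, hg⟩ := hp.exists_orderOf_eq_pow_factorization_exponent G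
  apply Nat.dvd_antisymm
  · rw [hm]
    refine Nat.pow_dvd_pow p ((hp.pow_dvd_iff_le_factorization ?_).mp ?_)
    · exact Monoid.exponent_ne_zero_of_finite
    · exact hm ▸ Monoid.exponent_submonoid_dvd P.toSubmonoid
  · rw [← hg, ← Subgroup.orderOf_mk g (P.mem_of_orderOf_eq_pow hg)]
    exact Monoid.order_dvd_exponent _

end Sylow

theorem isGKType_of_card_ker_powMonoidHom {P : Type*} [CommGroup P] [Finite P] {p k : ℕ}
    (hp : p.Prime) (hexp : Monoid.exponent P = p ^ (k + 1))
    (hker : Nat.card (powMonoidHom (p ^ k) : P →* P).ker * p = Nat.card P) :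
    IsGKType p P := by
  set K := (powMonoidHom (p ^ k) : P →* P).ker
  have hnontriv : Nontrivial P := by
    rw [← not_subsingleton_iff_nontrivial]
    intro
    exact (Nat.one_lt_pow k.succ_ne_zero hp.one_lt).ne' (hexp ▸ Monoid.exp_eq_one_of_subsingleton)
  refine ⟨inferInstance, hnontriv, .of_exponent_dvd_pow hexp.dvd, K, ?_, ?_⟩
  · ext y
    have hy : orderOf y ∣ p ^ (k + 1) := hexp ▸ Monoid.order_dvd_exponent y
    rw [SetLike.mem_coe, MonoidHom.mem_ker, powMonoidHom_apply, ← orderOf_dvd_iff_pow_eq_one,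
      Nat.dvd_prime_pow_iff_lt hp hy, hexp, Set.mem_ofPred_eq]
  · rw [← K.card_mul_index] at hker
    exact (Nat.eq_of_mul_eq_mul_left Nat.card_pos hker).symm

theorem card_ker_powMonoidHom_prod {G H : Type*} [CommGroup G] [CommGroup H] (d : ℕ) :
    Nat.card (powMonoidHom d : G × H →* G × H).ker =
      Nat.card (powMonoidHom d : G →* G).ker * Nat.card (powMonoidHom d : H →* H).ker := by
  have : (powMonoidHom d : G × H →* G × H) = (powMonoidHom d).prodMap (powMonoidHom d) := rfl
  rw [this, MonoidHom.ker_prodMap, Nat.card_congr (Subgroup.prodEquiv _ _).toEquiv, Nat.card_prod]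

theorem prod_primeFactors_pow_sub_eq_card_div_exponent {G : Type*} [CommGroup G] [Finite G]
    (n e : ℕ → ℕ)
    (hne : ∀ p : ℕ, p.Prime → p ∣ Nat.card G →
      ∀ P : Sylow p G, Nat.card P = p ^ n p ∧ Monoid.exponent P = p ^ e p) :
    ∏ p ∈ (Nat.card G).primeFactors, (p : ℚ) ^ (n p - e p) =
      (Nat.card G / Monoid.exponent G : ℕ) := by
  rw [← Nat.prod_primeFactors_pow_sub_factorization Group.exponent_dvd_nat_card Nat.card_pos.ne',
    Nat.cast_prod]
  refine Finset.prod_congr rfl fun p hp ↦ ?_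
  obtain ⟨hp, hpG, -⟩ := Nat.mem_primeFactors.mp hp
  have := Fact.mk hp
  obtain ⟨P⟩ : Nonempty (Sylow p G) := inferInstance
  obtain ⟨hn, he⟩ := hne p hp hpG P
  rw [P.card_eq_multiplicity] at hn
  rw [P.exponent_eq_pow_factorization] at he
  rw [Nat.pow_right_injective hp.two_le hn, Nat.pow_right_injective hp.two_le he, Nat.cast_pow]

section Construction

variable (N : ℕ)

abbrev GenusGroup := Multiplicative (ZMod (2 * N)) × Multiplicative (ZMod N)

theorem exponent_genusGroup : Monoid.exponent (GenusGroup N) = 2 * N := by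
  rw [Monoid.exponent_prod, Monoid.exponent_multiplicative, Monoid.exponent_multiplicative,
    ZMod.exponent, ZMod.exponent]
  exact Nat.lcm_eq_left (dvd_mul_left N 2)

variable [NeZero N]

instance : NeZero (2 * N) := ⟨mul_ne_zero two_ne_zero (NeZero.ne N)⟩

theorem card_genusGroup : Nat.card (GenusGroup N) = 2 * N * N := by
  simp [Nat.card_eq_fintype_card, ZMod.card]

theorem isGKType_sylow_two_genusGroup (P : Sylow 2 (GenusGroup N)) : IsGKType 2 P := by
  have := Fact.mk Nat.prime_two
  have hN := NeZero.ne N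
  set a := N.factorization 2
  have h2N : (2 * N).factorization 2 = a + 1 := by
    rw [Nat.factorization_mul two_ne_zero hN, Finsupp.add_apply, Nat.prime_two.factorization_self]
    omega
  have hcard : Nat.card P = 2 ^ (a + 1) * 2 ^ a := by
    rw [P.card_eq_multiplicity, card_genusGroup, Nat.factorization_mul (NeZero.ne _) hN,
      Finsupp.add_apply, h2N, pow_add]
  have h2a : 2 ^ a ∣ N := Nat.ordProj_dvd N 2
  refine isGKType_of_card_ker_powMonoidHom (k := a) Nat.prime_two ?_ ?_
  · rw [P.exponent_eq_pow_factorization, exponent_genusGroup, h2N]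
  · rw [hcard, P.card_ker_powMonoidHom, card_ker_powMonoidHom_prod,
      IsCyclic.card_powMonoidHom_ker, IsCyclic.card_powMonoidHom_ker]
    simp only [Nat.card_eq_fintype_card, Fintype.card_multiplicative, ZMod.card,
      Nat.gcd_eq_right (h2a.mul_left 2), Nat.gcd_eq_right h2a]
    ring

end Construction

open Classical in
/-- For every positive integer `N` there is a nontrivial finite group `G`
whose genus increment `N_G` equals `N`. -/
theorem stmt2 (N : ℕ) (hN : 0 < N) :
    ∃ (G : Type) (_ : Group G) (_ : Fintype G), Nontrivial G ∧
      ∀ n e : ℕ → ℕ,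
        (∀ p : ℕ, p.Prime → p ∣ Nat.card G →
          ∀ P : Sylow p G, Nat.card P = p ^ n p ∧ Monoid.exponent P = p ^ e p) →
        ∀ P₂ : Sylow 2 G,
          (N : ℚ) =
            (if Nat.card P₂ ≠ 1 ∧ ¬ IsGKType 2 P₂ then (1 / 2 : ℚ) else 1) *
              ∏ p ∈ (Nat.card G).primeFactors, (p : ℚ) ^ (n p - e p) := by
  have : NeZero N := ⟨hN.ne'⟩
  have : Fact (1 < 2 * N) := ⟨by omega⟩
  refine ⟨GenusGroup N, inferInstance, inferInstance, inferInstance, fun n e hne P₂ ↦ ?_⟩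
  rw [if_neg fun h ↦ h.2 (isGKType_sylow_two_genusGroup N P₂), one_mul,
    prod_primeFactors_pow_sub_eq_card_div_exponent n e hne, card_genusGroup,
    exponent_genusGroup, Nat.mul_div_cancel_left N (by omega)]
end

section
/- Let p be a prime and let R be a finite p-group of order p^n and exponent p^e which is not of GK-type. Then the following are equivalent: (i) for every l ≥ 1 there exists a chain of finite p-groups G = G_0 ≥ G_1 ≥ … ≥ G_l such that for each 0 ≤ i < l the group G_i is of GK-type with G_{i+1} = κ(G_i), and G_l is isomorphic to R; (ii) the exponent of the center Z(R) of R equals p^e. -/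
/-- The GK-core `κ(H)` of a subgroup `H`, i.e. the set of elements of `H` of
non-maximal order. -/
def kappaSet {G : Type*} [Group G] (H : Subgroup G) : Set G :=
  {y : G | y ∈ H ∧ orderOf y < Monoid.exponent H}

/-!
(ii) ⇒ (i): pick `z ∈ Z(R)` of order `p ^ e = exp R` and glue `R` to a cyclic group `⟨c⟩` of
order `p ^ (e + l)` along `z = c ^ p ^ l`. In this central product `G`, the map `x ↦ x ^ p ^ e`
is a homomorphism `ψ` onto the cyclic group `⟨c ^ p ^ e⟩` of order `p ^ l`, and the preimages
`G_i = ψ⁻¹ ⟨c ^ p ^ (e + i)⟩` are exactly the subgroups `{x | x ^ p ^ (e + l - i) = 1}`. Hence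
`G_{i+1}` is the GK-core of `G_i`, of index `p`, and `G_l = ker ψ ≅ R`.

(i) ⇒ (ii): along a chain `G_0 ≥ ⋯ ≥ G_l`, passing to the GK-core divides the exponent by exactly
`p` and `p`-th powers descend one step, so an element `g` of maximal order `p ^ (e + l)` gives
`g ^ p ^ l ∈ G_l ≅ R` of order `p ^ e`. All `G_i` are normal in `G`, and conjugation by `g` is an
automorphism of `G_l` of `p`-power order dividing `|Aut R|`; for `l = |Aut R|` it is therefore
killed by `p ^ l`, i.e. `g ^ p ^ l` is central in `G_l`.
-/

open Subgroup Monoid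

section PGroup

variable {p : ℕ} [hp : Fact p.Prime] {G : Type*} [Group G]

theorem IsPGroup.exists_orderOf_eq_exponent [Finite G] (hG : IsPGroup p G) :
    ∃ g : G, orderOf g = exponent G := by
  obtain ⟨g, hg⟩ := Finite.exists_max (orderOf : G → ℕ)
  refine ⟨g, (order_dvd_exponent g).antisymm (exponent_dvd_of_forall_pow_eq_one fun h ↦ ?_)⟩
  obtain ⟨a, ha⟩ := IsPGroup.iff_orderOf.mp hG h
  obtain ⟨b, hb⟩ := IsPGroup.iff_orderOf.mp hG g
  have hab : p ^ a ≤ p ^ b := ha ▸ hb ▸ hg h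
  rw [← orderOf_dvd_iff_pow_eq_one, ha, hb]
  exact pow_dvd_pow p ((Nat.pow_le_pow_iff_right hp.out.one_lt).mp hab)

theorem pow_prime_pow_eq_one_of_orderOf_lt {x : G} {k : ℕ} (hx : x ^ p ^ (k + 1) = 1)
    (hlt : orderOf x < p ^ (k + 1)) : x ^ p ^ k = 1 := by
  obtain ⟨a, ha, hxa⟩ := (Nat.dvd_prime_pow hp.out).mp (orderOf_dvd_of_pow_eq_one hx)
  rw [hxa, Nat.pow_lt_pow_iff_right hp.out.one_lt] at hlt
  rw [← orderOf_dvd_iff_pow_eq_one, hxa]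
  exact pow_dvd_pow p (Nat.lt_succ_iff.mp hlt)

theorem pow_prime_pow_card_eq_one [Finite G] {x : G} {k : ℕ} (hx : orderOf x ∣ p ^ k) :
    x ^ p ^ Nat.card G = 1 := by
  obtain ⟨s, -, hs⟩ := (Nat.dvd_prime_pow hp.out).mp hx
  have hle : p ^ s ≤ Nat.card G := Nat.le_of_dvd Nat.card_pos (hs ▸ orderOf_dvd_natCard x)
  have hlt : s < Nat.card G :=
    (Nat.pow_lt_pow_iff_right hp.out.one_lt).mp (hle.trans_lt (Nat.lt_pow_self hp.out.one_lt))
  rw [← orderOf_dvd_iff_pow_eq_one, hs]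
  exact pow_dvd_pow p hlt.le

theorem pow_prime_pow_card_mulAut_mem_centralizer {H : Subgroup G} [H.Normal] [Finite H] {g : G}
    {k : ℕ} (hg : orderOf g ∣ p ^ k) : g ^ p ^ Nat.card (MulAut H) ∈ centralizer (H : Set G) := by
  have hconj : MulAut.conjNormal (H := H) g ^ p ^ Nat.card (MulAut H) = 1 :=
    pow_prime_pow_card_eq_one ((orderOf_map_dvd _ g).trans hg)
  refine mem_centralizer_iff.mpr fun x hx ↦ ?_
  have hfix := congrArg Subtype.val (DFunLike.congr_fun hconj ⟨x, hx⟩)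
  rw [← map_pow, MulAut.conjNormal_apply] at hfix
  exact (mul_inv_eq_iff_eq_mul.mp hfix).symm

end PGroup

theorem Subgroup.exponent_eq_of_orderOf_eq {G : Type*} [Group G] {S : Subgroup G} {x : G}
    (hx : x ∈ S) (hord : orderOf x = exponent G) : exponent S = exponent G :=
  (exponent_dvd_of_monoidHom S.subtype S.subtype_injective).antisymm
    (hord ▸ orderOf_mk x hx ▸ order_dvd_exponent _)

section Kappa

variable {G : Type*} [Group G] {H K : Subgroup G}

theorem one_lt_exponent_of_coe_eq_kappaSet (hK : (K : Set G) = kappaSet H) :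
    1 < exponent H := by
  have h1 : (1 : G) ∈ kappaSet H := hK ▸ K.one_mem
  simpa using h1.2

theorem normal_of_coe_eq_kappaSet [hH : H.Normal] (hK : (K : Set G) = kappaSet H) :
    K.Normal := by
  refine ⟨fun x hx g ↦ ?_⟩
  rw [← SetLike.mem_coe, hK] at hx ⊢
  have hconj : orderOf (g * x * g⁻¹) = orderOf x := by
    simpa using orderOf_injective (MulAut.conj g).toMonoidHom (MulAut.conj g).injective x
  exact ⟨hH.conj_mem x hx.1 g, hconj ▸ hx.2⟩

theorem isGKType_of_coe_eq_kappaSet {p : ℕ} [Finite G] (hH : IsPGroup p H)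
    (hK : (K : Set G) = kappaSet H) (hindex : K.relIndex H = p) : IsGKType p H := by
  have hnt : Nontrivial H := by
    by_contra h
    exact (one_lt_exponent_of_coe_eq_kappaSet hK).ne'
      (exp_eq_one_iff.mpr (not_nontrivial_iff_subsingleton.mp h))
  refine ⟨inferInstance, hnt, hH, K.subgroupOf H, ?_, hindex⟩
  ext y
  simp only [SetLike.mem_coe, mem_subgroupOf, ← orderOf_coe, Set.mem_ofPred_eq]
  rw [← SetLike.mem_coe, hK]
  exact and_iff_right y.2

variable {p : ℕ} [hp : Fact p.Prime]

theorem coe_eq_kappaSet_of_forall_mem_iff {k : ℕ} (hH : ∀ x, x ∈ H ↔ x ^ p ^ (k + 1) = 1)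
    (hK : ∀ x, x ∈ K ↔ x ^ p ^ k = 1) (hexp : exponent H = p ^ (k + 1)) :
    (K : Set G) = kappaSet H := by
  ext x
  simp only [SetLike.mem_coe, kappaSet, Set.mem_ofPred_eq, hH, hK, hexp]
  refine ⟨fun hx ↦ ⟨by rw [pow_succ, pow_mul, hx, one_pow], ?_⟩,
    fun hx ↦ pow_prime_pow_eq_one_of_orderOf_lt hx.1 hx.2⟩
  exact (orderOf_le_of_pow_eq_one (pow_pos hp.out.pos k) hx).trans_lt
    (Nat.pow_lt_pow_right hp.out.one_lt k.lt_succ_self)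

variable [Finite G] (hH : IsPGroup p H) (hK : (K : Set G) = kappaSet H)
include hH hK

theorem exists_exponent_eq_prime_pow_succ : ∃ f, exponent H = p ^ (f + 1) := by
  obtain ⟨_ | f, hf⟩ := hH.exists_exponent_eq_pow
  · simpa [hf] using one_lt_exponent_of_coe_eq_kappaSet hK
  · exact ⟨f, hf⟩

theorem pow_mem_of_coe_eq_kappaSet {x : G} (hx : x ∈ H) : x ^ p ∈ K := by
  obtain ⟨f, hf⟩ := exists_exponent_eq_prime_pow_succ hH hK
  rw [← SetLike.mem_coe, hK]
  refine ⟨H.pow_mem hx p, ?_⟩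
  have hpow : (x ^ p) ^ p ^ f = 1 := by
    rw [← pow_mul, ← pow_succ', ← hf, pow_exponent_eq_one hx]
  rw [hf]
  exact (orderOf_le_of_pow_eq_one (pow_pos hp.out.pos f) hpow).trans_lt
    (Nat.pow_lt_pow_right hp.out.one_lt f.lt_succ_self)

theorem exponent_eq_prime_mul_of_coe_eq_kappaSet : exponent H = p * exponent K := by
  obtain ⟨f, hf⟩ := exists_exponent_eq_prime_pow_succ hH hK
  suffices exponent K = p ^ f by rw [hf, this, pow_succ']
  apply dvd_antisymm
  · refine exponent_dvd_of_forall_pow_eq_one fun y ↦ Subtype.ext ?_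
    have hy : (y : G) ∈ kappaSet H := hK ▸ y.2
    exact pow_prime_pow_eq_one_of_orderOf_lt (hf ▸ pow_exponent_eq_one hy.1) (hf ▸ hy.2)
  · obtain ⟨g, hg⟩ := hH.exists_orderOf_eq_exponent
    have hdvd : p ∣ orderOf (g : G) := by
      rw [orderOf_coe, hg, hf]
      exact dvd_pow_self p f.succ_ne_zero
    have hgp : orderOf ((g : G) ^ p) = p ^ f := by
      rw [orderOf_pow_of_dvd hp.out.ne_zero hdvd, orderOf_coe, hg, hf, pow_succ,
        Nat.mul_div_cancel _ hp.out.pos]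
    rw [← hgp, ← orderOf_mk _ (pow_mem_of_coe_eq_kappaSet hH hK g.2)]
    exact order_dvd_exponent _

end Kappa

section KappaChain

variable {p : ℕ} [hp : Fact p.Prime] {G : Type*} [Group G] {K : ℕ → Subgroup G} {l : ℕ}

theorem normal_of_kappa_chain [(K 0).Normal]
    (hK : ∀ j < l, (K (j + 1) : Set G) = kappaSet (K j)) : (K l).Normal := by
  induction l with
  | zero => assumption
  | succ l ih =>
    have := ih fun j hj ↦ hK j (by omega)
    exact normal_of_coe_eq_kappaSet (hK l l.lt_succ_self)

variable [Finite G] (hG : IsPGroup p G)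
include hG

theorem exponent_eq_prime_pow_mul_of_kappa_chain
    (hK : ∀ j < l, (K (j + 1) : Set G) = kappaSet (K j)) :
    exponent (K 0) = p ^ l * exponent (K l) := by
  induction l with
  | zero => simp
  | succ l ih =>
    rw [ih fun j hj ↦ hK j (by omega), pow_succ, mul_assoc,
      exponent_eq_prime_mul_of_coe_eq_kappaSet (hG.to_subgroup _) (hK l l.lt_succ_self)]

theorem pow_prime_pow_mem_of_kappa_chain
    (hK : ∀ j < l, (K (j + 1) : Set G) = kappaSet (K j)) {g : G} (hg : g ∈ K 0) :
    g ^ p ^ l ∈ K l := by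
  induction l with
  | zero => simpa
  | succ l ih =>
    rw [pow_succ, pow_mul]
    exact pow_mem_of_coe_eq_kappaSet (hG.to_subgroup _) (hK l l.lt_succ_self)
      (ih fun j hj ↦ hK j (by omega))

theorem exponent_center_eq_of_kappa_chain {R : Type*} [Group R] [Finite R] (hK0 : K 0 = ⊤)
    (hK : ∀ j < Nat.card (MulAut R), (K (j + 1) : Set G) = kappaSet (K j))
    (φ : K (Nat.card (MulAut R)) ≃* R) : exponent (center R) = exponent R := by
  set l := Nat.card (MulAut R)
  have : (K 0).Normal := hK0 ▸ normal_top
  have : (K l).Normal := normal_of_kappa_chain hK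
  obtain ⟨g, hg⟩ := (hG.to_subgroup (K 0)).exists_orderOf_eq_exponent
  obtain ⟨k, hk⟩ := hG g
  have hexp := exponent_eq_prime_pow_mul_of_kappa_chain hG hK
  have hz : (g : G) ^ p ^ l ∈ K l := pow_prime_pow_mem_of_kappa_chain hG hK g.2
  have hdvd : p ^ l ∣ orderOf (g : G) := by
    rw [orderOf_coe, hg, hexp]
    exact dvd_mul_right _ _
  have hzord : orderOf ((g : G) ^ p ^ l) = exponent (K l) := by
    rw [orderOf_pow_of_dvd (pow_ne_zero _ hp.out.ne_zero) hdvd, orderOf_coe, hg, hexp,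
      Nat.mul_div_cancel_left _ (pow_pos hp.out.pos _)]
  have hcent : (g : G) ^ p ^ l ∈ centralizer (K l : Set G) := by
    have hcard : Nat.card (MulAut (K l)) = l := Nat.card_congr (MulAut.congr φ).toEquiv
    simpa only [hcard] using pow_prime_pow_card_mulAut_mem_centralizer
      (H := K l) (orderOf_dvd_of_pow_eq_one hk)
  have hzc : (⟨_, hz⟩ : K l) ∈ center (K l) := mem_center_iff.mpr fun x ↦
    Subtype.ext (mem_centralizer_iff.mp hcent x x.2)
  refine exponent_eq_of_orderOf_eq (MulEquivClass.apply_mem_center φ hzc) ?_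
  rw [MulEquiv.orderOf_eq, orderOf_mk, hzord, exponent_eq_of_mulEquiv φ]

end KappaChain

section Cyclic

variable {G : Type*} [Group G]

theorem orderOf_pow_prime_pow {p l i : ℕ} (hp : 0 < p) {γ : G} (hγ : orderOf γ = p ^ l)
    (hi : i ≤ l) : orderOf (γ ^ p ^ i) = p ^ (l - i) := by
  rw [orderOf_pow_of_dvd (pow_ne_zero _ hp.ne') (hγ ▸ pow_dvd_pow p hi), hγ, Nat.pow_div hi hp]

theorem mem_zpowers_pow_iff_pow_eq_one {γ d : G} {m k : ℕ} (hk : k ≠ 0)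
    (hγ : orderOf γ = m * k) (hd : d ∈ zpowers γ) : d ∈ zpowers (γ ^ m) ↔ d ^ k = 1 := by
  constructor
  · rintro ⟨s, rfl⟩
    rw [← zpow_natCast, ← zpow_mul, mul_comm, zpow_mul, zpow_natCast, ← pow_mul, ← hγ,
      pow_orderOf_eq_one, one_zpow]
  · obtain ⟨t, rfl⟩ := hd
    intro ht
    rw [← zpow_natCast, ← zpow_mul, ← orderOf_dvd_iff_zpow_eq_one, hγ, Nat.cast_mul] at ht
    obtain ⟨s, rfl⟩ := Int.dvd_of_mul_dvd_mul_right (by exact_mod_cast hk) ht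
    exact ⟨s, by simp only [zpow_mul, zpow_natCast]⟩

theorem relIndex_zpowers_pow {x : G} {n : ℕ} (hx : orderOf x ≠ 0) (hn : n ∣ orderOf x) :
    (zpowers (x ^ n)).relIndex (zpowers x) = n := by
  have hn0 : n ≠ 0 := ne_zero_of_dvd_ne_zero hx hn
  have hmul := relIndex_mul_relIndex ⊥ (zpowers (x ^ n)) (zpowers x) bot_le
    (zpowers_le.mpr (pow_mem (mem_zpowers x) n))
  rw [relIndex_bot_left, relIndex_bot_left, Nat.card_zpowers, Nat.card_zpowers,
    orderOf_pow_of_dvd hn0 hn] at hmul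
  refine Nat.eq_of_mul_eq_mul_left (Nat.div_pos (Nat.le_of_dvd (Nat.pos_of_ne_zero hx) hn)
    (Nat.pos_of_ne_zero hn0)) ?_
  rw [hmul, Nat.div_mul_cancel hn]

end Cyclic

def layer {G C : Type*} [Group G] [Group C] (p : ℕ) (ψ : G →* C) (γ : C) (i : ℕ) : Subgroup G :=
  (zpowers (γ ^ p ^ i)).comap ψ

section Layer

variable {p e l : ℕ} {G C : Type*} [Group G] [Group C] {ψ : G →* C} {γ : C}

theorem layer_zero (hrange : ψ.range = zpowers γ) : layer p ψ γ 0 = ⊤ := by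
  rw [layer, pow_zero, pow_one, ← hrange, MonoidHom.comap_range_self]

theorem layer_last (hγ : orderOf γ = p ^ l) : layer p ψ γ l = ψ.ker := by
  rw [layer, ← hγ, pow_orderOf_eq_one, zpowers_one_eq_bot, MonoidHom.comap_bot]

theorem relIndex_layer_succ [hp : Fact p.Prime] (hrange : ψ.range = zpowers γ)
    (hγ : orderOf γ = p ^ l) {i : ℕ} (hi : i < l) :
    (layer p ψ γ (i + 1)).relIndex (layer p ψ γ i) = p := by
  have hle : zpowers (γ ^ p ^ i) ≤ ψ.range :=
    hrange ▸ zpowers_le.mpr (pow_mem (mem_zpowers γ) _)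
  rw [layer, layer, relIndex_comap, map_comap_eq_self hle, pow_succ, pow_mul]
  apply relIndex_zpowers_pow <;> rw [orderOf_pow_prime_pow hp.out.pos hγ hi.le]
  · exact pow_ne_zero _ hp.out.ne_zero
  · exact dvd_pow_self p (by omega)

variable [hp : Fact p.Prime] (hψ : ∀ x k, x ^ p ^ (e + k) = 1 ↔ ψ x ^ p ^ k = 1)
  (hrange : ψ.range = zpowers γ) (hγ : orderOf γ = p ^ l)
include hψ hrange hγ

theorem mem_layer_iff {i : ℕ} (hi : i ≤ l) {x : G} :
    x ∈ layer p ψ γ i ↔ x ^ p ^ (e + (l - i)) = 1 := by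
  rw [layer, mem_comap, hψ, mem_zpowers_pow_iff_pow_eq_one (pow_ne_zero _ hp.out.ne_zero)
    (by rw [hγ, ← pow_add, Nat.add_sub_cancel' hi]) (hrange ▸ ⟨x, rfl⟩)]

theorem isPGroup_of_layer : IsPGroup p G := fun x ↦
  ⟨e + l, by simpa using (mem_layer_iff hψ hrange hγ l.zero_le).mp (layer_zero hrange ▸ mem_top x)⟩

theorem exponent_layer {i : ℕ} (hi : i < l) : exponent (layer p ψ γ i) = p ^ (e + (l - i)) := by
  obtain ⟨k, hk⟩ : ∃ k, l - i = k + 1 := ⟨l - i - 1, by omega⟩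
  obtain ⟨g, hg⟩ : γ ∈ ψ.range := hrange ▸ mem_zpowers γ
  have hord : orderOf (ψ (g ^ p ^ i)) = p ^ (k + 1) := by
    rw [map_pow, hg, orderOf_pow_prime_pow hp.out.pos hγ hi.le, hk]
  have hmem : g ^ p ^ i ∈ layer p ψ γ i := by
    rw [layer, mem_comap, map_pow, hg]
    exact mem_zpowers _
  have hgord : orderOf (g ^ p ^ i) = p ^ (e + (l - i)) := by
    rw [hk, ← add_assoc]
    refine orderOf_eq_prime_pow (fun h ↦ ?_) ((hψ _ _).mpr (hord ▸ pow_orderOf_eq_one _))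
    exact pow_ne_one_of_lt_orderOf (pow_ne_zero _ hp.out.ne_zero)
      (hord ▸ Nat.pow_lt_pow_right hp.out.one_lt k.lt_succ_self) ((hψ _ _).mp h)
  apply dvd_antisymm
  · exact exponent_dvd_of_forall_pow_eq_one fun y ↦
      Subtype.ext ((mem_layer_iff hψ hrange hγ hi.le).mp y.2)
  · rw [← hgord, ← orderOf_mk _ hmem]
    exact order_dvd_exponent _

theorem coe_layer_succ_eq_kappaSet {i : ℕ} (hi : i < l) :
    (layer p ψ γ (i + 1) : Set G) = kappaSet (layer p ψ γ i) := by
  have hk : e + (l - i) = e + (l - (i + 1)) + 1 := by omega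
  refine coe_eq_kappaSet_of_forall_mem_iff (fun x ↦ ?_) (fun x ↦ mem_layer_iff hψ hrange hγ hi)
    (hk ▸ exponent_layer hψ hrange hγ hi)
  rw [← hk]
  exact mem_layer_iff hψ hrange hγ hi.le

theorem isGKType_layer [Finite G] {i : ℕ} (hi : i < l) : IsGKType p (layer p ψ γ i) :=
  isGKType_of_coe_eq_kappaSet ((isPGroup_of_layer hψ hrange hγ).to_subgroup _)
    (coe_layer_succ_eq_kappaSet hψ hrange hγ hi) (relIndex_layer_succ hrange hγ hi)

end Layer

theorem pow_prime_pow_add_eq_one_iff {p e : ℕ} {G C : Type*} [Group G] [Group C] {ψ : G →* C}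
    {ι : C →* G} (hι : Function.Injective ι) (hpow : ∀ x, x ^ p ^ e = ι (ψ x)) (x : G) (k : ℕ) :
    x ^ p ^ (e + k) = 1 ↔ ψ x ^ p ^ k = 1 := by
  rw [pow_add, pow_mul, hpow, ← map_pow, map_eq_one_iff _ hι]

theorem normal_zpowers_of_mem_center {G : Type*} [Group G] {x : G} (hx : x ∈ center G) :
    (zpowers x).Normal := by
  refine ⟨fun n hn g ↦ ?_⟩
  rwa [mem_center_iff.mp (zpowers_le.mpr hx hn) g, mul_inv_cancel_right]

theorem zpow_eq_one_iff_of_orderOf_eq {G H : Type*} [Group G] [Group H] {a : G} {b : H}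
    (h : orderOf a = orderOf b) (k : ℤ) : a ^ k = 1 ↔ b ^ k = 1 := by
  rw [← orderOf_dvd_iff_zpow_eq_one, ← orderOf_dvd_iff_zpow_eq_one, h]

theorem mem_zpowers_ofAdd_one {n : ℕ} (d : Multiplicative (ZMod n)) :
    d ∈ zpowers (Multiplicative.ofAdd (1 : ZMod n)) := by
  obtain ⟨k, hk⟩ := ZMod.intCast_surjective d.toAdd
  exact ⟨k, show _ ^ k = d by rw [← ofAdd_zsmul, zsmul_one, hk]; rfl⟩

theorem orderOf_ofAdd_one (n : ℕ) : orderOf (Multiplicative.ofAdd (1 : ZMod n)) = n := by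
  rw [orderOf_ofAdd_eq_addOrderOf, ZMod.addOrderOf_one]

section Construction

variable {R : Type*} [Group R] (p e l : ℕ) (z : center R)

local notation "Cyc" => Multiplicative (ZMod (p ^ (e + l)))

/-- The relation `z = c ^ p ^ l`, where `c = ofAdd 1` generates `Cyc`. -/
def gkRelator : R × Cyc := ((z : R)⁻¹, Multiplicative.ofAdd 1 ^ p ^ l)

instance : (zpowers (gkRelator p e l z)).Normal :=
  normal_zpowers_of_mem_center <| mem_center_iff.mpr fun g ↦
    Prod.ext (mem_center_iff.mp (inv_mem z.2) g.1) (mul_comm _ _)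

/-- The central product of `R` with a cyclic group of order `p ^ (e + l)`, amalgamating `z`
with `c ^ p ^ l`. -/
abbrev GKExt := (R × Cyc) ⧸ zpowers (gkRelator p e l z)

def GKExt.inl : R →* GKExt p e l z := (QuotientGroup.mk' _).comp (MonoidHom.inl R Cyc)

def GKExt.inr : Cyc →* GKExt p e l z := (QuotientGroup.mk' _).comp (MonoidHom.inr R Cyc)

def GKExt.powHom : GKExt p e l z →* Cyc :=
  QuotientGroup.lift _ ((powMonoidHom (p ^ e)).comp (MonoidHom.snd R Cyc)) <| zpowers_le.mpr <| by
    rw [MonoidHom.mem_ker, MonoidHom.comp_apply, MonoidHom.coe_snd, gkRelator, powMonoidHom_apply,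
      ← pow_mul, ← pow_add, Nat.add_comm l e]
    have h := pow_orderOf_eq_one (Multiplicative.ofAdd (1 : ZMod (p ^ (e + l))))
    rwa [orderOf_ofAdd_one] at h

variable {p e l z}

theorem GKExt.pow_eq_inr_powHom (hR : exponent R ∣ p ^ e) (x : GKExt p e l z) :
    x ^ p ^ e = GKExt.inr p e l z (GKExt.powHom p e l z x) := by
  induction x using QuotientGroup.induction_on with | H y =>
  rw [← QuotientGroup.mk_pow]
  exact congrArg _ (Prod.ext (exponent_dvd_iff_forall_pow_eq_one.mp hR y.1) rfl)

theorem GKExt.range_powHom :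
    (GKExt.powHom p e l z).range = zpowers (Multiplicative.ofAdd 1 ^ p ^ e) := by
  refine le_antisymm ?_ (zpowers_le.mpr ⟨QuotientGroup.mk (1, Multiplicative.ofAdd 1), rfl⟩)
  rintro _ ⟨x, rfl⟩
  induction x using QuotientGroup.induction_on with | H y =>
  obtain ⟨k, hk : Multiplicative.ofAdd 1 ^ k = y.2⟩ := mem_zpowers_ofAdd_one y.2
  refine ⟨k, show _ ^ k = y.2 ^ p ^ e from ?_⟩
  rw [← hk, ← zpow_natCast, ← zpow_natCast, ← zpow_mul, ← zpow_mul, mul_comm]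

variable [hp : Fact p.Prime]

theorem orderOf_ofAdd_one_pow_left :
    orderOf (Multiplicative.ofAdd (1 : ZMod (p ^ (e + l))) ^ p ^ e) = p ^ l := by
  rw [orderOf_pow_prime_pow hp.out.pos (orderOf_ofAdd_one (p ^ (e + l)))
    (Nat.le_add_right e l),
    Nat.add_sub_cancel_left]

theorem orderOf_ofAdd_one_pow_right :
    orderOf (Multiplicative.ofAdd (1 : ZMod (p ^ (e + l))) ^ p ^ l) = p ^ e := by
  rw [orderOf_pow_prime_pow hp.out.pos (orderOf_ofAdd_one (p ^ (e + l)))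
    (Nat.le_add_left l e),
    Nat.add_sub_cancel]

theorem GKExt.range_inl_eq_ker_powHom :
    (GKExt.inl p e l z).range = (GKExt.powHom p e l z).ker := by
  ext x
  constructor
  · rintro ⟨r, rfl⟩
    exact one_pow _
  · induction x using QuotientGroup.induction_on with | H y =>
    intro hy
    obtain ⟨r, d⟩ := y
    obtain ⟨k, rfl⟩ := (mem_zpowers_pow_iff_pow_eq_one (pow_ne_zero _ hp.out.ne_zero)
      (by rw [orderOf_ofAdd_one, pow_add, mul_comm]) (mem_zpowers_ofAdd_one d)).mpr hy
    have hsplit : ((r, (Multiplicative.ofAdd 1 ^ p ^ l) ^ k) : R × Cyc) =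
        (r * (z : R) ^ k, 1) * gkRelator p e l z ^ k :=
      Prod.ext (by simp [gkRelator]) (by simp [gkRelator])
    refine ⟨r * (z : R) ^ k, ?_⟩
    rw [hsplit, QuotientGroup.mk_mul,
      (QuotientGroup.eq_one_iff _).mpr (zpow_mem (mem_zpowers _) k), mul_one]
    rfl

variable (hz : orderOf (z : R) = p ^ e)
include hz

theorem gkRelator_zpow_fst_eq_one_iff (k : ℤ) :
    (gkRelator p e l z ^ k).1 = 1 ↔ (gkRelator p e l z ^ k).2 = 1 :=
  zpow_eq_one_iff_of_orderOf_eq (by rw [gkRelator, orderOf_inv, hz, orderOf_ofAdd_one_pow_right]) k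

theorem GKExt.inl_injective : Function.Injective (GKExt.inl p e l z) := by
  refine (injective_iff_map_eq_one _).mpr fun r hr ↦ ?_
  obtain ⟨k, hk⟩ := mem_zpowers_iff.mp ((QuotientGroup.eq_one_iff _).mp hr)
  have hfst : (gkRelator p e l z ^ k).1 = r := congrArg Prod.fst hk
  exact hfst ▸ (gkRelator_zpow_fst_eq_one_iff hz k).mpr (congrArg Prod.snd hk)

theorem GKExt.inr_injective : Function.Injective (GKExt.inr p e l z) := by
  refine (injective_iff_map_eq_one _).mpr fun d hd ↦ ?_
  obtain ⟨k, hk⟩ := mem_zpowers_iff.mp ((QuotientGroup.eq_one_iff _).mp hd)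
  have hsnd : (gkRelator p e l z ^ k).2 = d := congrArg Prod.snd hk
  exact hsnd ▸ (gkRelator_zpow_fst_eq_one_iff hz k).mp (congrArg Prod.fst hk)

noncomputable def GKExt.kerPowHomEquiv : (GKExt.powHom p e l z).ker ≃* R :=
  (MulEquiv.subgroupCongr GKExt.range_inl_eq_ker_powHom.symm).trans
    (MonoidHom.ofInjective (GKExt.inl_injective hz)).symm

end Construction

theorem exists_kappa_chain_of_exponent_center_eq {p e : ℕ} [Fact p.Prime] {R : Type} [Group R]
    [Finite R] (hexp : exponent R = p ^ e) (hZ : exponent (center R) = p ^ e) (l : ℕ) :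
    ∃ (G : Type) (_ : Group G) (_ : Finite G), IsPGroup p G ∧
      ∃ K : Fin (l + 1) → Subgroup G,
        K 0 = ⊤ ∧
        (∀ i : Fin l, IsGKType p ↥(K i.castSucc) ∧
          ((K i.succ : Subgroup G) : Set G) = kappaSet (K i.castSucc)) ∧
        Nonempty (↥(K (Fin.last l)) ≃* R) := by
  obtain ⟨z, hz⟩ := (IsPGroup.of_exponent_dvd_pow hZ.dvd).exists_orderOf_eq_exponent
  rw [hZ, ← orderOf_coe] at hz
  have hψ := pow_prime_pow_add_eq_one_iff (GKExt.inr_injective (l := l) hz)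
    (GKExt.pow_eq_inr_powHom hexp.dvd)
  have hrange := GKExt.range_powHom (p := p) (e := e) (l := l) (z := z)
  have hγ := orderOf_ofAdd_one_pow_left (p := p) (e := e) (l := l)
  refine ⟨GKExt p e l z, inferInstance, inferInstance, isPGroup_of_layer hψ hrange hγ,
    fun i ↦ layer p (GKExt.powHom p e l z) (Multiplicative.ofAdd 1 ^ p ^ e) i,
    layer_zero hrange, fun i ↦ ⟨isGKType_layer hψ hrange hγ i.isLt,
      coe_layer_succ_eq_kappaSet hψ hrange hγ i.isLt⟩, ?_⟩
  exact ⟨(MulEquiv.subgroupCongr (layer_last hγ)).trans (GKExt.kerPowHomEquiv hz)⟩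

theorem stmt3_general (p e : ℕ) (hp : p.Prime) (R : Type) [Group R] [Finite R]
    (hexp : Monoid.exponent R = p ^ e) :
    (∀ l : ℕ, 1 ≤ l →
      ∃ (G : Type) (_ : Group G) (_ : Finite G), IsPGroup p G ∧
        ∃ K : Fin (l + 1) → Subgroup G,
          K 0 = ⊤ ∧
          (∀ i : Fin l, IsGKType p ↥(K i.castSucc) ∧
            ((K i.succ : Subgroup G) : Set G) = kappaSet (K i.castSucc)) ∧
          Nonempty (↥(K (Fin.last l)) ≃* R)) ↔
    Monoid.exponent (Subgroup.center R) = p ^ e := by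
  have := Fact.mk hp
  refine ⟨fun h ↦ ?_, fun hZ l _ ↦ exists_kappa_chain_of_exponent_center_eq hexp hZ l⟩
  obtain ⟨G, _, _, hG, K, hK0, hK, ⟨φ⟩⟩ := h (Nat.card (MulAut R)) Nat.card_pos
  rw [← hexp]
  open Fin.NatCast in
  refine exponent_center_eq_of_kappa_chain hG (K := fun j : ℕ ↦ K j) (by simpa using hK0)
    (fun j hj ↦ ?_) ((MulEquiv.subgroupCongr (by rw [Fin.natCast_eq_last])).trans φ)
  rw [Fin.natCast_eq_mk (by omega), Fin.natCast_eq_mk (by omega)]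
  exact (hK ⟨j, hj⟩).2

/-- The GK-tree with root `R` is infinite (i.e. `R` admits iterated GK-extensions
of arbitrary length) if and only if the center of `R` has exponent `p^e`. -/
theorem stmt3 (p n e : ℕ) (hp : p.Prime) (R : Type) [Group R] [Finite R]
    (hpR : IsPGroup p R) (hcard : Nat.card R = p ^ n)
    (hexp : Monoid.exponent R = p ^ e) (hnotGK : ¬ IsGKType p R) :
    (∀ l : ℕ, 1 ≤ l →
      ∃ (G : Type) (_ : Group G) (_ : Finite G), IsPGroup p G ∧
        ∃ K : Fin (l + 1) → Subgroup G,
          K 0 = ⊤ ∧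
          (∀ i : Fin l, IsGKType p ↥(K i.castSucc) ∧
            ((K i.succ : Subgroup G) : Set G) = kappaSet (K i.castSucc)) ∧
          Nonempty (↥(K (Fin.last l)) ≃* R)) ↔
    Monoid.exponent (Subgroup.center R) = p ^ e :=
  stmt3_general p e hp R hexp
end

section
/- Let p be a prime and G a finite p-group. Suppose R is a regular subgroup of G, t ∈ Z(G) is a central element, and G is generated by {t} together with R. Then G is regular. -/
/-!
Since `t` is central, `G = Z(G) R`, so `x = z r` and `y = w s` with `z, w` central and
`r, s ∈ R`. Central factors pull out of `p`-th powers and drop out of commutators;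
hence the witness `c ∈ ⟨r, s⟩'` given by the regularity of `R` lies in `⟨x, y⟩'`
and serves for `x, y`.
-/

/-- A finite `p`-group `G` is regular if for all `x, y ∈ G` there is
`c ∈ [H, H]`, where `H = ⟨x, y⟩`, with `x^p * y^p = (x*y)^p * c^p`. -/
def IsRegularPGroup (p : ℕ) (G : Type*) [Group G] : Prop :=
  ∀ x y : G,
    ∃ c ∈ ⁅Subgroup.closure ({x, y} : Set G), Subgroup.closure ({x, y} : Set G)⁆,
      x ^ p * y ^ p = (x * y) ^ p * c ^ p

open Subgroup
open scoped commutatorElement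

section Center

variable {G : Type*} [Group G] {z w : G}

theorem commutatorElement_mul_left_of_mem_center (hz : z ∈ center G) (a b : G) :
    ⁅z * a, b⁆ = ⁅a, b⁆ := by
  have hconj := mem_center_iff.mp hz (a * b * a⁻¹)
  rw [commutatorElement_def, commutatorElement_def]
  calc z * a * b * (z * a)⁻¹ * b⁻¹ = z * (a * b * a⁻¹) * z⁻¹ * b⁻¹ := by group
    _ = a * b * a⁻¹ * b⁻¹ := by rw [← hconj]; group

theorem commutatorElement_mul_right_of_mem_center (hz : z ∈ center G) (a b : G) :
    ⁅a, z * b⁆ = ⁅a, b⁆ := by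
  rw [← commutatorElement_inv, commutatorElement_mul_left_of_mem_center hz,
    commutatorElement_inv]

theorem Subgroup.commutator_center_sup_self (H : Subgroup G) :
    ⁅center G ⊔ H, center G ⊔ H⁆ = ⁅H, H⁆ := by
  refine le_antisymm (commutator_le.mpr ?_) (commutator_mono le_sup_right le_sup_right)
  intro _ hg _ hg'
  obtain ⟨z, hz, a, ha, rfl⟩ := mem_sup_of_normal_left.mp hg
  obtain ⟨w, hw, b, hb, rfl⟩ := mem_sup_of_normal_left.mp hg'
  rw [commutatorElement_mul_left_of_mem_center hz, commutatorElement_mul_right_of_mem_center hw]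
  exact commutator_mem_commutator ha hb

theorem mul_pow_mul_mul_pow_of_mem_center (hz : z ∈ center G) (hw : w ∈ center G)
    {a b c : G} {n : ℕ} (h : a ^ n * b ^ n = (a * b) ^ n * c ^ n) :
    (z * a) ^ n * (w * b) ^ n = (z * a * (w * b)) ^ n * c ^ n := by
  have hcomm : ∀ {u : G}, u ∈ center G → ∀ g, Commute u g :=
    fun hu g => (mem_center_iff.mp hu g).symm
  have hprod : z * a * (w * b) = z * w * (a * b) := by
    rw [mul_assoc z, ← mul_assoc a, ← (hcomm hw a).eq]
    simp only [mul_assoc]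
  calc (z * a) ^ n * (w * b) ^ n = z ^ n * w ^ n * (a ^ n * b ^ n) := by
        rw [(hcomm hz a).mul_pow, (hcomm hw b).mul_pow, mul_assoc, ← mul_assoc (a ^ n),
          ← (hcomm (pow_mem hw n) _).eq]
        simp only [mul_assoc]
    _ = (z * a * (w * b)) ^ n * c ^ n := by
        rw [h, hprod, (hcomm (mul_mem hz hw) _).mul_pow, (hcomm hz w).mul_pow]
        simp only [mul_assoc]

end Center

theorem IsRegularPGroup.of_center_sup_eq_top {p : ℕ} {G : Type*} [Group G] {R : Subgroup G}
    (hR : IsRegularPGroup p R) (hRG : center G ⊔ R = ⊤) : IsRegularPGroup p G := by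
  intro x y
  obtain ⟨z, hz, r, hr, rfl⟩ := mem_sup_of_normal_left.mp (hRG ▸ mem_top x)
  obtain ⟨w, hw, s, hs, rfl⟩ := mem_sup_of_normal_left.mp (hRG ▸ mem_top y)
  obtain ⟨c, hc, hpow⟩ := hR ⟨r, hr⟩ ⟨s, hs⟩
  refine ⟨c, ?_, mul_pow_mul_mul_pow_of_mem_center hz hw
    (by simpa using congrArg R.subtype hpow)⟩
  have hc' : (c : G) ∈ ⁅closure {r, s}, closure {r, s}⁆ := by
    simpa [map_commutator, MonoidHom.map_closure, Set.image_pair] using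
      mem_map_of_mem R.subtype hc
  have hrs : closure {r, s} ≤ center G ⊔ closure {z * r, w * s} := by
    have hx : z * r ∈ closure {z * r, w * s} := subset_closure (by simp)
    have hy : w * s ∈ closure {z * r, w * s} := subset_closure (by simp)
    refine (closure_le _).mpr (Set.pair_subset ?_ ?_)
    · simpa using mul_mem_sup (inv_mem hz) hx
    · simpa using mul_mem_sup (inv_mem hw) hy
  rw [← commutator_center_sup_self]
  exact commutator_mono hrs hrs hc'

theorem stmt5_general (p : ℕ) (G : Type*) [Group G]
    (R : Subgroup G) (hR : IsRegularPGroup p ↥R)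
    (t : G) (ht : t ∈ Subgroup.center G)
    (hgen : Subgroup.closure ({t} ∪ (R : Set G)) = ⊤) :
    IsRegularPGroup p G := by
  refine hR.of_center_sup_eq_top (top_unique ?_)
  rw [← hgen, Subgroup.closure_union, closure_eq]
  exact sup_le_sup_right ((closure_le _).mpr (Set.singleton_subset_iff.mpr ht)) R

/-- If a finite `p`-group `G` is generated by a regular subgroup `R` together
with a central element `t`, then `G` is regular. -/
theorem stmt5 (p : ℕ) (hp : p.Prime) (G : Type*) [Group G] [Finite G]
    (hG : IsPGroup p G) (R : Subgroup G) (hR : IsRegularPGroup p ↥R)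
    (t : G) (ht : t ∈ Subgroup.center G)
    (hgen : Subgroup.closure ({t} ∪ (R : Set G)) = ⊤) :
    IsRegularPGroup p G :=
  stmt5_general p G R hR t ht hgen
end

section
/- Fix an integer e ≥ 2. A positive integer M can be written as M = 2^e·h + ∑_{i=1}^{e−1} m_i (2^{e−1} − 2^{e−1−i}) with nonnegative integers h, m_1, …, m_{e−1} if and only if the following holds: writing M uniquely as M = ∑_{i=0}^{e−1} a_i 2^i with a_i ∈ {0,1} for 0 ≤ i ≤ e−2 and a_{e−1} a nonnegative integer, and letting i₀ be the least index with a_{i₀} ≠ 0, one has ∑_{i=0}^{e−1} a_i ≥ e − 1 − i₀. -/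
/-- `M` is a solution of the diophantine equation
`M = 2^e·h + ∑_{i=1}^{e-1} m_i (2^{e-1} - 2^{e-1-i})` with `h, m_i ≥ 0`. -/
def Rep2 (e M : ℕ) : Prop :=
  ∃ (h : ℕ) (m : ℕ → ℕ),
    M = 2 ^ e * h + ∑ i ∈ Finset.Icc 1 (e - 1), m i * (2 ^ (e - 1) - 2 ^ (e - 1 - i))

/-!
Put `n = e - 1`. Since `(2^n - 2^i) + 2^i = 2^n`, `M` is a solution iff some sum `X` of `k`
powers `2^i` with `i < n` gives `M + X = T·2^n` with `k ≤ T`: the parity of `T - k` can be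
fixed with two more copies of `2^(n-1)`. Such a sum has at least `s(X mod 2^n) + ⌊X / 2^n⌋`
terms, `s` being the binary digit sum, since this quantity is subadditive and equals `1` on
each `2^i`. Hence the best choice is `X = 2^n - (M mod 2^n)`, and for `M mod 2^n ≠ 0` the
criterion reads `s(2^n - M mod 2^n) ≤ ⌊M / 2^n⌋ + 1`. If `M mod 2^n = 2^{i₀}·(odd)`, then
`2^n - M mod 2^n` is the complement of `M mod 2^n - 1` below `2^n`, which gives
`s(2^n - M mod 2^n) = n + 1 - i₀ - s(M mod 2^n)`.
-/

open Finset

namespace Nat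

def bitSum (n : ℕ) : ℕ := (Nat.digits 2 n).sum

@[simp] lemma bitSum_zero : bitSum 0 = 0 := by simp [bitSum]

lemma bitSum_eq_bitSum_div_two_add (n : ℕ) : bitSum n = bitSum (n / 2) + n % 2 := by
  rcases n.eq_zero_or_pos with rfl | hn
  · simp
  · rw [bitSum, digits_def' one_lt_two hn, List.sum_cons, add_comm]; rfl

lemma bitSum_of_le_one {n : ℕ} (hn : n ≤ 1) : bitSum n = n := by
  interval_cases n <;> simp [bitSum]

lemma bitSum_two_pow_mul_add (c m : ℕ) {v : ℕ} (hv : v < 2 ^ c) :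
    bitSum (2 ^ c * m + v) = bitSum m + bitSum v := by
  induction c generalizing v with
  | zero => simp_all
  | succ c ih =>
    have h : 2 ^ (c + 1) * m + v = 2 * (2 ^ c * m + v / 2) + v % 2 := by
      rw [pow_succ, mul_comm _ 2, mul_assoc]; omega
    rw [h, bitSum_eq_bitSum_div_two_add, bitSum_eq_bitSum_div_two_add v,
      ← add_assoc, ← ih (by rw [pow_succ] at hv; omega),
      show (2 * (2 ^ c * m + v / 2) + v % 2) / 2 = 2 ^ c * m + v / 2 by omega,
      show (2 * (2 ^ c * m + v / 2) + v % 2) % 2 = v % 2 by omega]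

lemma bitSum_two_pow (c : ℕ) : bitSum (2 ^ c) = 1 := by
  simpa [bitSum_of_le_one] using bitSum_two_pow_mul_add c 1 (v := 0) (by positivity)

lemma bitSum_add_le (a b : ℕ) : bitSum (a + b) ≤ bitSum a + bitSum b := by
  induction h : a + b using Nat.strong_induction_on generalizing a b with
  | _ N ih =>
    rcases N.eq_zero_or_pos with rfl | hN
    · simp_all
    subst h
    have hcarry : a / 2 + b / 2 + (a % 2 + b % 2) / 2 = (a + b) / 2 := by omega
    have h₁ := ih _ (by omega) _ _ hcarry
    have h₂ := ih (a / 2 + b / 2) (by omega) (a / 2) (b / 2) rfl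
    have h₃ : bitSum ((a % 2 + b % 2) / 2) = (a % 2 + b % 2) / 2 := bitSum_of_le_one (by omega)
    rw [bitSum_eq_bitSum_div_two_add, bitSum_eq_bitSum_div_two_add a,
      bitSum_eq_bitSum_div_two_add b]
    omega

lemma bitSum_add_bitSum_two_pow_sub_one_sub (n : ℕ) {x : ℕ} (hx : x < 2 ^ n) :
    bitSum x + bitSum (2 ^ n - 1 - x) = n := by
  induction n generalizing x with
  | zero => simp_all
  | succ n ih =>
    rw [pow_succ] at hx
    have h := ih (x := x / 2) (by omega)
    rw [bitSum_eq_bitSum_div_two_add x, bitSum_eq_bitSum_div_two_add (2 ^ (n + 1) - 1 - x),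
      show (2 ^ (n + 1) - 1 - x) / 2 = 2 ^ n - 1 - x / 2 by rw [pow_succ]; omega,
      show (2 ^ (n + 1) - 1 - x) % 2 = 1 - x % 2 by rw [pow_succ]; omega]
    omega

lemma bitSum_two_pow_sub_one (n : ℕ) : bitSum (2 ^ n - 1) = n := by
  simpa using bitSum_add_bitSum_two_pow_sub_one_sub n (x := 0) (by positivity)

lemma bitSum_two_pow_sub_add_bitSum {n k u : ℕ} (hr : 2 ^ k * (2 * u + 1) < 2 ^ n) :
    bitSum (2 ^ n - 2 ^ k * (2 * u + 1)) + bitSum (2 ^ k * (2 * u + 1)) + k = n + 1 := by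
  have hk : 0 < 2 ^ k := by positivity
  have hr' : 2 ^ k * (2 * u + 1) = 2 ^ (k + 1) * u + 2 ^ k := by ring
  have hr₁ : bitSum (2 ^ k * (2 * u + 1)) = bitSum u + 1 := by
    rw [hr', bitSum_two_pow_mul_add _ _ (by rw [pow_succ]; omega), bitSum_two_pow]
  have hr₀ : bitSum (2 ^ k * (2 * u + 1) - 1) = bitSum u + k := by
    rw [hr', show 2 ^ (k + 1) * u + 2 ^ k - 1 = 2 ^ (k + 1) * u + (2 ^ k - 1) by omega,
      bitSum_two_pow_mul_add _ _ (by rw [pow_succ]; omega), bitSum_two_pow_sub_one]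
  have h := bitSum_add_bitSum_two_pow_sub_one_sub n (x := 2 ^ k * (2 * u + 1) - 1) (by omega)
  rw [show 2 ^ n - 1 - (2 ^ k * (2 * u + 1) - 1) = 2 ^ n - 2 ^ k * (2 * u + 1) by omega] at h
  omega

section Digits

variable {n : ℕ} {a : ℕ → ℕ}

lemma sum_mul_two_pow_lt (ha : ∀ i < n, a i ≤ 1) : ∑ i ∈ range n, a i * 2 ^ i < 2 ^ n := by
  induction n with
  | zero => simp
  | succ n ih =>
    have h := ih fun i hi => ha i (by omega)
    have hn : a n * 2 ^ n ≤ 2 ^ n := mul_le_of_le_one_left (Nat.zero_le _) (ha n (by omega))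
    rw [sum_range_succ, pow_succ]
    omega

lemma bitSum_sum_mul_two_pow (ha : ∀ i < n, a i ≤ 1) :
    bitSum (∑ i ∈ range n, a i * 2 ^ i) = ∑ i ∈ range n, a i := by
  induction n with
  | zero => simp
  | succ n ih =>
    rw [sum_range_succ, sum_range_succ, add_comm, mul_comm,
      bitSum_two_pow_mul_add _ _ (sum_mul_two_pow_lt fun i hi => ha i (by omega)),
      ih fun i hi => ha i (by omega), bitSum_of_le_one (ha n (by omega)), add_comm]

lemma exists_sum_mul_two_pow_eq_two_pow_mul_odd {k : ℕ} (hk : k < n) (hak : a k = 1)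
    (hlow : ∀ j < k, a j = 0) : ∃ u, ∑ i ∈ range n, a i * 2 ^ i = 2 ^ k * (2 * u + 1) := by
  induction n, hk using Nat.le_induction with
  | base =>
    refine ⟨0, ?_⟩
    rw [sum_range_succ, sum_eq_zero fun j hj => by rw [hlow j (mem_range.mp hj), zero_mul], hak]
    ring
  | succ n hkn ih =>
    obtain ⟨u, hu⟩ := ih
    refine ⟨u + a n * 2 ^ (n - k - 1), ?_⟩
    have hn : 2 ^ n = 2 ^ k * (2 * 2 ^ (n - k - 1)) := by
      rw [← pow_succ', ← pow_add]; congr 1; omega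
    rw [sum_range_succ, hu, hn]
    ring

lemma mod_two_pow_eq_sum_of_eq_sum {M : ℕ} (ha : ∀ i < n, a i ≤ 1)
    (hM : M = ∑ i ∈ range (n + 1), a i * 2 ^ i) :
    M % 2 ^ n = ∑ i ∈ range n, a i * 2 ^ i ∧ M / 2 ^ n = a n := by
  have hlt := sum_mul_two_pow_lt ha
  rw [hM, sum_range_succ, mul_comm (a n), add_comm]
  exact ⟨by rw [Nat.mul_add_mod, Nat.mod_eq_of_lt hlt],
    by rw [Nat.mul_add_div (by positivity), Nat.div_eq_of_lt hlt, add_zero]⟩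

lemma exists_lowest_digit_eq_one {M : ℕ} (ha : ∀ i < n, a i ≤ 1)
    (hM : M = ∑ i ∈ range (n + 1), a i * 2 ^ i) (hdvd : ¬ 2 ^ n ∣ M) :
    ∃ k < n, a k = 1 ∧ ∀ j < k, a j = 0 := by
  obtain ⟨i, hi, hai⟩ : ∃ i < n, a i ≠ 0 := by
    by_contra! h
    refine hdvd (Nat.dvd_of_mod_eq_zero ((mod_two_pow_eq_sum_of_eq_sum ha hM).1.trans ?_))
    exact sum_eq_zero fun i hi => by rw [h i (mem_range.mp hi), zero_mul]
  have hex : ∃ i, a i ≠ 0 := ⟨i, hai⟩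
  have hk : Nat.find hex < n := (Nat.find_min' hex hai).trans_lt hi
  refine ⟨Nat.find hex, hk, ?_, fun j hj => not_not.mp (Nat.find_min hex hj)⟩
  have := ha _ hk
  have := Nat.find_spec hex
  omega

lemma exists_eq_sum_mul_two_pow (n M : ℕ) : ∃ a : ℕ → ℕ, (∀ i < n, a i ≤ 1) ∧
    (∀ i, n < i → a i = 0) ∧ M = ∑ i ∈ range (n + 1), a i * 2 ^ i := by
  induction n generalizing M with
  | zero =>
    exact ⟨fun i => if i = 0 then M else 0, by simp, fun i hi => if_neg (by omega), by simp⟩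
  | succ n ih =>
    obtain ⟨a, ha, ha', hM⟩ := ih (M / 2)
    refine ⟨fun i => if i = 0 then M % 2 else a (i - 1), fun i hi => ?_, fun i hi => ?_, ?_⟩
    · dsimp only
      split_ifs
      · omega
      · exact ha _ (by omega)
    · simp only [show i ≠ 0 by omega, if_false]
      exact ha' _ (by omega)
    · rw [sum_range_succ']
      simp only [add_tsub_cancel_right, if_false, if_true, pow_zero, mul_one, pow_succ,
        Nat.add_one_ne_zero, ← mul_assoc, ← sum_mul, ← hM]
      omega

end Digits

/-- `∑ a_i` for `X = ∑_{i ≤ n} a_i 2^i` with bits `a_i` (`i < n`) and an unbounded top digit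
`a_n`, as in the statement of `stmt6`. -/
def mixedDigitSum (n X : ℕ) : ℕ := bitSum (X % 2 ^ n) + X / 2 ^ n

section MixedDigitSum

variable {n : ℕ}

lemma mixedDigitSum_two_pow_mul_add (q b : ℕ) :
    mixedDigitSum n (2 ^ n * q + b) = q + mixedDigitSum n b := by
  have h : 0 < 2 ^ n := by positivity
  rw [mixedDigitSum, mixedDigitSum, Nat.mul_add_mod, Nat.mul_add_div h]
  ring

lemma mixedDigitSum_of_lt {b : ℕ} (hb : b < 2 ^ (n + 1)) : mixedDigitSum n b = bitSum b := by
  have hq : b / 2 ^ n ≤ 1 := by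
    rw [Nat.div_le_iff_le_mul_add_pred (by positivity)]; rw [pow_succ] at hb; omega
  conv_rhs => rw [← Nat.div_add_mod b (2 ^ n)]
  rw [mixedDigitSum, bitSum_two_pow_mul_add _ _ (Nat.mod_lt _ (by positivity)),
    bitSum_of_le_one hq, add_comm]

lemma mixedDigitSum_add_le (X Y : ℕ) :
    mixedDigitSum n (X + Y) ≤ mixedDigitSum n X + mixedDigitSum n Y := by
  have h : X + Y = 2 ^ n * (X / 2 ^ n + Y / 2 ^ n) + (X % 2 ^ n + Y % 2 ^ n) := by
    rw [Nat.mul_add]; nth_rw 1 [← Nat.div_add_mod X (2 ^ n), ← Nat.div_add_mod Y (2 ^ n)]; ring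
  have hX := Nat.mod_lt X (show 0 < 2 ^ n by positivity)
  have hY := Nat.mod_lt Y (show 0 < 2 ^ n by positivity)
  rw [h, mixedDigitSum_two_pow_mul_add, mixedDigitSum_of_lt (by rw [pow_succ]; omega),
    mixedDigitSum, mixedDigitSum]
  have := bitSum_add_le (X % 2 ^ n) (Y % 2 ^ n)
  omega

lemma mixedDigitSum_mul_two_pow_le (m : ℕ) {c : ℕ} (hc : c ≤ n) :
    mixedDigitSum n (m * 2 ^ c) ≤ m := by
  induction m with
  | zero => simp [mixedDigitSum]
  | succ m ih =>
    have h₁ : mixedDigitSum n (2 ^ c) = 1 := by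
      rw [mixedDigitSum_of_lt (Nat.pow_lt_pow_right one_lt_two (by omega)), bitSum_two_pow]
    have h₂ := mixedDigitSum_add_le (n := n) (m * 2 ^ c) (2 ^ c)
    rw [add_mul, one_mul]
    omega

lemma mixedDigitSum_sum_le (s : Finset ℕ) (hs : ∀ i ∈ s, i ≤ n) (m : ℕ → ℕ) :
    mixedDigitSum n (∑ i ∈ s, m i * 2 ^ i) ≤ ∑ i ∈ s, m i :=
  (le_sum_of_subadditive _ (by simp [mixedDigitSum]) mixedDigitSum_add_le _ _).trans
    (sum_le_sum fun i hi => mixedDigitSum_mul_two_pow_le _ (hs i hi))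

lemma mixedDigitSum_eq_sum {a : ℕ → ℕ} {M : ℕ} (ha : ∀ i < n, a i ≤ 1)
    (hM : M = ∑ i ∈ range (n + 1), a i * 2 ^ i) :
    mixedDigitSum n M = ∑ i ∈ range (n + 1), a i := by
  obtain ⟨hmod, hdiv⟩ := mod_two_pow_eq_sum_of_eq_sum ha hM
  rw [mixedDigitSum, hmod, hdiv, bitSum_sum_mul_two_pow ha, sum_range_succ]

end MixedDigitSum

end Nat

open Nat

lemma rep2_succ_iff (n M : ℕ) : Rep2 (n + 1) M ↔
    ∃ (h : ℕ) (m : ℕ → ℕ), M = 2 ^ (n + 1) * h + ∑ i ∈ range n, m i * (2 ^ n - 2 ^ i) := by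
  have reflect (f : ℕ → ℕ) : ∑ i ∈ Icc 1 n, f (n - i) = ∑ i ∈ range n, f i := by
    rw [← Finset.Ico_add_one_right_eq_Icc, sum_Ico_reflect f 1 le_rfl]
    simp
  simp only [Rep2, Nat.add_sub_cancel]
  constructor
  · rintro ⟨h, m, hM⟩
    refine ⟨h, fun i => m (n - i), ?_⟩
    rw [hM, ← reflect]
    congr 1
    exact sum_congr rfl fun i hi => by dsimp only; rw [Nat.sub_sub_self (mem_Icc.mp hi).2]
  · rintro ⟨h, m, hM⟩
    exact ⟨h, fun i => m (n - i), by rw [hM, ← reflect (fun i => m i * (2 ^ n - 2 ^ i))]⟩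

lemma rep2_succ_iff_exists_add_eq (n M : ℕ) : Rep2 (n + 1) M ↔ ∃ (h : ℕ) (m : ℕ → ℕ),
    M + ∑ i ∈ range n, m i * 2 ^ i = (2 * h + ∑ i ∈ range n, m i) * 2 ^ n := by
  have split (m : ℕ → ℕ) : ∑ i ∈ range n, m i * (2 ^ n - 2 ^ i) + ∑ i ∈ range n, m i * 2 ^ i
      = (∑ i ∈ range n, m i) * 2 ^ n := by
    rw [← sum_add_distrib, sum_mul]
    refine sum_congr rfl fun i hi => ?_
    rw [← Nat.mul_add, Nat.sub_add_cancel (Nat.pow_le_pow_right two_pos (mem_range.mp hi).le)]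
  rw [rep2_succ_iff]
  refine exists_congr fun h => exists_congr fun m => ?_
  have := split m
  rw [show (2 * h + ∑ i ∈ range n, m i) * 2 ^ n = 2 ^ (n + 1) * h + (∑ i ∈ range n, m i) * 2 ^ n
    by ring]
  omega

lemma rep2_succ_iff_exists_le {n M : ℕ} (hn : 1 ≤ n) : Rep2 (n + 1) M ↔ ∃ (m : ℕ → ℕ) (T : ℕ),
    M + ∑ i ∈ range n, m i * 2 ^ i = T * 2 ^ n ∧ ∑ i ∈ range n, m i ≤ T := by
  rw [rep2_succ_iff_exists_add_eq]
  constructor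
  · rintro ⟨h, m, hM⟩
    exact ⟨m, _, hM, by omega⟩
  · rintro ⟨m, T, hM, hT⟩
    rcases Nat.even_or_odd (T - ∑ i ∈ range n, m i) with ⟨h, hh⟩ | ⟨h, hh⟩
    · exact ⟨h, m, by rw [hM]; congr 1; omega⟩
    · refine ⟨h, fun i => m i + if i = n - 1 then 2 else 0, ?_⟩
      have hn' : n - 1 ∈ range n := mem_range.mpr (by omega)
      have h2 : 2 * 2 ^ (n - 1) = 2 ^ n := by rw [← pow_succ']; congr 1; omega
      simp only [add_mul, sum_add_distrib, ite_mul, zero_mul, sum_ite_eq', hn', if_true]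
      rw [← add_assoc, hM, h2, show T = ∑ i ∈ range n, m i + 2 * h + 1 by omega]
      ring

lemma rep2_succ_of_two_pow_dvd {n M : ℕ} (hn : 1 ≤ n) (h : 2 ^ n ∣ M) : Rep2 (n + 1) M := by
  obtain ⟨q, rfl⟩ := h
  exact (rep2_succ_iff_exists_le hn).mpr ⟨0, q, by simp [mul_comm], by simp⟩

lemma rep2_succ_iff_bitSum_le {n M : ℕ} (hn : 1 ≤ n) (hr : M % 2 ^ n ≠ 0) :
    Rep2 (n + 1) M ↔ bitSum (2 ^ n - M % 2 ^ n) ≤ M / 2 ^ n + 1 := by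
  have hrlt := Nat.mod_lt M (show 0 < 2 ^ n by positivity)
  have hqr := Nat.div_add_mod' M (2 ^ n)
  rw [rep2_succ_iff_exists_le hn]
  constructor
  · rintro ⟨m, T, hM, hT⟩
    have hqT : M / 2 ^ n < T := by
      by_contra! hle
      have := Nat.mul_le_mul_right (2 ^ n) hle
      omega
    obtain ⟨j, rfl⟩ : ∃ j, T = M / 2 ^ n + 1 + j := ⟨T - M / 2 ^ n - 1, by omega⟩
    have hX : ∑ i ∈ range n, m i * 2 ^ i = 2 ^ n * j + (2 ^ n - M % 2 ^ n) := by
      rw [add_mul, add_mul, one_mul, mul_comm j] at hM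
      omega
    have h := mixedDigitSum_sum_le (range n) (fun i hi => (mem_range.mp hi).le) m
    rw [hX, mixedDigitSum_two_pow_mul_add, mixedDigitSum_of_lt (by rw [pow_succ]; omega)] at h
    omega
  · intro h
    obtain ⟨a, ha, -, hw⟩ := exists_eq_sum_mul_two_pow n (2 ^ n - M % 2 ^ n)
    have hw' := (mod_two_pow_eq_sum_of_eq_sum ha hw).1
    rw [Nat.mod_eq_of_lt (by omega)] at hw'
    refine ⟨a, M / 2 ^ n + 1, ?_, ?_⟩
    · rw [← hw', add_mul, one_mul]
      omega
    · rwa [← bitSum_sum_mul_two_pow ha, ← hw']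

lemma rep2_succ_iff_le_mixedDigitSum {n M k u : ℕ} (hn : 1 ≤ n)
    (hr : M % 2 ^ n = 2 ^ k * (2 * u + 1)) : Rep2 (n + 1) M ↔ n - k ≤ mixedDigitSum n M := by
  have hrlt := Nat.mod_lt M (show 0 < 2 ^ n by positivity)
  rw [hr] at hrlt
  have h := bitSum_two_pow_sub_add_bitSum hrlt
  have hk : k < n := (Nat.pow_lt_pow_iff_right one_lt_two).mp
    ((Nat.le_mul_of_pos_right _ (by omega)).trans_lt hrlt)
  rw [rep2_succ_iff_bitSum_le hn (by rw [hr]; positivity), mixedDigitSum, hr]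
  omega

theorem stmt6_general (e : ℕ) (he : 2 ≤ e) (M : ℕ) :
    Rep2 e M ↔
      ∀ a : ℕ → ℕ, (∀ i, i ≤ e - 2 → a i ≤ 1) → (∀ i, e ≤ i → a i = 0) →
        M = ∑ i ∈ Finset.range e, a i * 2 ^ i →
        ∀ i₀ : ℕ, a i₀ ≠ 0 → (∀ j, j < i₀ → a j = 0) →
          e - 1 - i₀ ≤ ∑ i ∈ Finset.range e, a i := by
  obtain ⟨n, rfl⟩ : ∃ n, e = n + 1 := ⟨e - 1, by omega⟩
  have hn : 1 ≤ n := by omega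
  constructor
  · intro hrep a ha _ hM i₀ hi₀ hlow
    have ha' : ∀ i < n, a i ≤ 1 := fun i hi => ha i (by omega)
    rcases lt_or_ge i₀ n with hi₀n | hi₀n
    · obtain ⟨u, hu⟩ := exists_sum_mul_two_pow_eq_two_pow_mul_odd hi₀n
        (by have := ha' i₀ hi₀n; omega) hlow
      have hr := (mod_two_pow_eq_sum_of_eq_sum ha' hM).1.trans hu
      rw [← mixedDigitSum_eq_sum ha' hM]
      simpa using (rep2_succ_iff_le_mixedDigitSum hn hr).mp hrep
    · omega
  · intro hdigits
    by_cases hdvd : 2 ^ n ∣ M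
    · exact rep2_succ_of_two_pow_dvd hn hdvd
    obtain ⟨a, ha, ha', hM⟩ := exists_eq_sum_mul_two_pow n M
    obtain ⟨k, hk, hak, hlow⟩ := exists_lowest_digit_eq_one ha hM hdvd
    obtain ⟨u, hu⟩ := exists_sum_mul_two_pow_eq_two_pow_mul_odd hk hak hlow
    rw [rep2_succ_iff_le_mixedDigitSum hn ((mod_two_pow_eq_sum_of_eq_sum ha hM).1.trans hu),
      mixedDigitSum_eq_sum ha hM]
    simpa using hdigits a (fun i hi => ha i (by omega)) (fun i hi => ha' i (by omega)) hM k
      (by omega) hlow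

/-- Characterization of the solutions: writing `M = ∑_{i=0}^{e-1} a_i 2^i`
with `a_i ∈ {0,1}` for `i ≤ e-2` and `a_{e-1} ≥ 0`, and `i₀` the least index
with `a_{i₀} ≠ 0`, the number `M` is a solution iff `∑ a_i ≥ e - 1 - i₀`. -/
theorem stmt6 (e : ℕ) (he : 2 ≤ e) (M : ℕ) (hM : 0 < M) :
    Rep2 e M ↔
      ∀ a : ℕ → ℕ, (∀ i, i ≤ e - 2 → a i ≤ 1) → (∀ i, e ≤ i → a i = 0) →
        M = ∑ i ∈ Finset.range e, a i * 2 ^ i →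
        ∀ i₀ : ℕ, a i₀ ≠ 0 → (∀ j, j < i₀ → a j = 0) →
          e - 1 - i₀ ≤ ∑ i ∈ Finset.range e, a i :=
  stmt6_general e he M
end

section
/- Fix an integer e ≥ 3. Every integer M ≥ (e−3)·2^{e−1} + 2 can be written as M = 2^e·h + ∑_{i=1}^{e−1} m_i (2^{e−1} − 2^{e−1−i}) with nonnegative integers h, m_1, …, m_{e−1}, while (e−3)·2^{e−1} + 1 cannot be so written. Hence the least stable solution δ_e(2) of this diophantine equation equals (e−3)·2^{e−1} + 2. -/
open Finset

-- `x / 2^d` plus the binary digit sum of `x % 2^d`: the fewest powers of two `≤ 2^d`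
-- adding up to `x`.
def cappedWeight : ℕ → ℕ → ℕ
  | 0, x => x
  | d + 1, x => x % 2 + cappedWeight d (x / 2)

@[simp]
theorem cappedWeight_zero_right (d : ℕ) : cappedWeight d 0 = 0 := by
  induction d with
  | zero => rfl
  | succ d ih => simp [cappedWeight, ih]

theorem cappedWeight_add_two_pow_le {d c : ℕ} (hc : c ≤ d) (x : ℕ) :
    cappedWeight d (x + 2 ^ c) ≤ cappedWeight d x + 1 := by
  induction d generalizing c x with
  | zero =>
    obtain rfl : c = 0 := by omega
    simp [cappedWeight]
  | succ d ih =>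
    rcases c with _ | c
    · have := ih (Nat.zero_le d) (x / 2)
      rcases Nat.mod_two_eq_zero_or_one x with hx | hx
      · simp only [cappedWeight, pow_zero, show (x + 1) / 2 = x / 2 by omega]
        omega
      · simp only [cappedWeight, pow_zero, show (x + 1) / 2 = x / 2 + 2 ^ 0 by omega] at this ⊢
        omega
    · have := ih (Nat.le_of_succ_le_succ hc) (x / 2)
      rw [pow_succ] at *
      simp only [cappedWeight, show (x + 2 ^ c * 2) / 2 = x / 2 + 2 ^ c by omega]
      omega

theorem cappedWeight_add_mul_two_pow_le {d c : ℕ} (hc : c ≤ d) (x n : ℕ) :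
    cappedWeight d (x + n * 2 ^ c) ≤ cappedWeight d x + n := by
  induction n with
  | zero => simp
  | succ n ih =>
    rw [add_one_mul, ← add_assoc]
    have := cappedWeight_add_two_pow_le hc (x + n * 2 ^ c)
    omega

theorem cappedWeight_sum_le {ι : Type*} {d : ℕ} (s : Finset ι) (m g : ι → ℕ)
    (hg : ∀ i ∈ s, g i ≤ d) : cappedWeight d (∑ i ∈ s, m i * 2 ^ g i) ≤ ∑ i ∈ s, m i := by
  classical
  induction s using Finset.induction_on with
  | empty => simp
  | insert a s ha ih =>
    rw [sum_insert ha, sum_insert ha, add_comm (m a * _), add_comm (m a)]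
    have := cappedWeight_add_mul_two_pow_le (hg a (mem_insert_self a s))
      (∑ i ∈ s, m i * 2 ^ g i) (m a)
    have := ih fun i hi => hg i (mem_insert_of_mem hi)
    omega

theorem cappedWeight_mul_two_pow_add_pred (a d : ℕ) :
    cappedWeight d (a * 2 ^ d + (2 ^ d - 1)) = a + d := by
  induction d with
  | zero => simp [cappedWeight]
  | succ d ih =>
    have hpos : 0 < 2 ^ d := by positivity
    have hmul : a * 2 ^ (d + 1) = 2 * (a * 2 ^ d) := by ring
    rw [cappedWeight, hmul, pow_succ,
      show (2 * (a * 2 ^ d) + (2 ^ d * 2 - 1)) / 2 = a * 2 ^ d + (2 ^ d - 1) by omega, ih]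
    omega

theorem sum_range_sub_two_pow_add {N t : ℕ} (h : 2 ^ t ≤ N) :
    ∑ j ∈ range t, (N - 2 ^ (j + 1)) + 2 ^ (t + 1) = t * N + 2 := by
  induction t with
  | zero => simp
  | succ t ih =>
    have := ih (le_trans (Nat.pow_le_pow_right two_pos t.le_succ) h)
    rw [sum_range_succ, add_one_mul, pow_succ 2 (t + 1)]
    rw [pow_succ] at h this
    omega

theorem Rep2.add {e a b : ℕ} (ha : Rep2 e a) (hb : Rep2 e b) : Rep2 e (a + b) := by
  obtain ⟨h, m, rfl⟩ := ha
  obtain ⟨h', m', rfl⟩ := hb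
  refine ⟨h + h', m + m', ?_⟩
  simp only [Pi.add_apply, add_mul, sum_add_distrib]
  ring

theorem rep2_mul_two_pow_sub {e c : ℕ} (hc : c < e - 1) (k : ℕ) :
    Rep2 e (k * (2 ^ (e - 1) - 2 ^ c)) := by
  refine ⟨0, fun i => if i = e - 1 - c then k else 0, ?_⟩
  simp only [ite_mul, zero_mul, sum_ite_eq', mem_Icc, show e - 1 - (e - 1 - c) = c by omega]
  simp [show 1 ≤ e - 1 - c by omega]

theorem rep2_sum_range_add {e t r : ℕ} (ht : t < e - 1) (hr : r < 2 ^ t) :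
    Rep2 e (∑ j ∈ range t, (2 ^ (e - 1) - 2 ^ (j + 1)) + r) := by
  induction t generalizing r with
  | zero =>
    obtain rfl : r = 0 := by simpa using hr
    exact ⟨0, 0, by simp⟩
  | succ t ih =>
    have hN : 2 ^ (t + 1) ≤ 2 ^ (e - 1) := Nat.pow_le_pow_right two_pos (by omega)
    rw [sum_range_succ]
    rcases lt_or_ge r (2 ^ t) with hr' | hr'
    · convert (ih (by omega) hr').add (rep2_mul_two_pow_sub (c := t + 1) (by omega) 1) using 1
      omega
    · rw [pow_succ] at hr hN
      convert (ih (r := r - 2 ^ t) (by omega) (by omega)).add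
        (rep2_mul_two_pow_sub (c := t) (by omega) 1) using 1
      omega

theorem rep2_of_le {e M : ℕ} (he : 2 ≤ e)
    (hM : ∑ j ∈ range (e - 2), (2 ^ (e - 1) - 2 ^ (j + 1)) ≤ M) : Rep2 e M := by
  set base := ∑ j ∈ range (e - 2), (2 ^ (e - 1) - 2 ^ (j + 1))
  have hhalf : 2 ^ (e - 1) - 2 ^ (e - 2) = 2 ^ (e - 2) := by
    rw [show e - 1 = e - 2 + 1 by omega, pow_succ]
    omega
  have hrest := rep2_sum_range_add (e := e) (t := e - 2) (r := (M - base) % 2 ^ (e - 2))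
    (by omega) (Nat.mod_lt _ (by positivity))
  have hquot := rep2_mul_two_pow_sub (e := e) (c := e - 2) (by omega) ((M - base) / 2 ^ (e - 2))
  convert hrest.add hquot using 1
  rw [hhalf, mul_comm, add_assoc, Nat.mod_add_div]
  omega

theorem not_rep2 {e : ℕ} (he : 3 ≤ e) : ¬ Rep2 e ((e - 3) * 2 ^ (e - 1) + 1) := by
  obtain ⟨d, rfl⟩ : ∃ d, e = d + 3 := ⟨e - 3, by omega⟩
  rintro ⟨h, m, hM⟩
  simp only [Nat.add_sub_cancel, show d + 3 - 1 = d + 2 from rfl] at hM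
  set N := 2 ^ (d + 2)
  set s := ∑ i ∈ Icc 1 (d + 2), m i
  set T := ∑ i ∈ Icc 1 (d + 2), m i * 2 ^ (d + 2 - i)
  have hcomplete : ∑ i ∈ Icc 1 (d + 2), m i * (N - 2 ^ (d + 2 - i)) + T = s * N := by
    rw [← sum_add_distrib, sum_mul]
    refine sum_congr rfl fun i _ => ?_
    rw [← mul_add, Nat.sub_add_cancel (Nat.pow_le_pow_right two_pos (Nat.sub_le _ _))]
  have hT : d * N + 1 + T = (2 * h + s) * N := by
    rw [show 2 ^ (d + 3) = 2 * N by rw [pow_succ, mul_comm]] at hM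
    rw [add_mul, ← hcomplete, hM]
    ring
  have hweight : cappedWeight (d + 1) T ≤ s :=
    cappedWeight_sum_le _ _ _ fun i hi => by simp only [mem_Icc] at hi; omega
  obtain ⟨k, hk⟩ : ∃ k, 2 * h + s = d + k + 1 := by
    refine ⟨2 * h + s - d - 1, ?_⟩
    by_contra hlt
    have := Nat.mul_le_mul_right N (show 2 * h + s ≤ d by omega)
    omega
  have hN : N = 2 * 2 ^ (d + 1) := pow_succ' 2 (d + 1)
  have hTval : T = (2 * k + 1) * 2 ^ (d + 1) + (2 ^ (d + 1) - 1) := by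
    rw [hk, hN] at hT
    have hsucc : T + 1 = 2 * (k * 2 ^ (d + 1)) + 2 * 2 ^ (d + 1) := by linarith
    have hpos : 0 < 2 ^ (d + 1) := by positivity
    rw [show (2 * k + 1) * 2 ^ (d + 1) = 2 * (k * 2 ^ (d + 1)) + 2 ^ (d + 1) by ring]
    omega
  rw [hTval, cappedWeight_mul_two_pow_add_pred] at hweight
  omega

/-- The least stable solution `δ_e(2)` equals `(e-3)·2^{e-1} + 2`: every
`M ≥ (e-3)·2^{e-1} + 2` is a solution, while `(e-3)·2^{e-1} + 1` is not. -/
theorem stmt7 (e : ℕ) (he : 3 ≤ e) :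
    (∀ M : ℕ, (e - 3) * 2 ^ (e - 1) + 2 ≤ M → Rep2 e M) ∧
      ¬ Rep2 e ((e - 3) * 2 ^ (e - 1) + 1) := by
  refine ⟨fun M hM => rep2_of_le (by omega) ?_, not_rep2 he⟩
  obtain ⟨d, rfl⟩ : ∃ d, e = d + 3 := ⟨e - 3, by omega⟩
  have hbase := sum_range_sub_two_pow_add (N := 2 ^ (d + 2)) (t := d + 1)
    (Nat.pow_le_pow_right two_pos (by omega))
  simp only [show d + 3 - 1 = d + 2 from rfl, show d + 3 - 2 = d + 1 from rfl,
    Nat.add_sub_cancel] at hM ⊢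
  rw [add_one_mul, show d + 1 + 1 = d + 2 from rfl] at hbase
  omega
end

section
/- Let e ≥ 5 and let G be the dihedral group of order 2^{e+1}. Then the minimum genus of G equals 2^{e−1}; that is, 2^{e−1} ∈ sp(G) and every g ∈ sp(G) satisfies g ≥ 2^{e−1}. -/
/-!
By Riemann–Hurwitz, `2(g - 1) = |G| μ` with `μ = 2(h - 1) + ∑ (1 - 1/nⱼ)`, and `g ≥ 2` forces
`μ > 0`; so it suffices to show `μ ≥ 1/2 - 1/2^e` for every generating vector of `G = D_{2^e}`.
When `h ≥ 1` or `r ≥ 5` either `μ ≤ 0` or `μ ≥ 1/2`, and `μ ≤ 0` when `h = 0, r ≤ 2`. In the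
remaining cases the key is parity: a character `χ : G → ℤ/2` that is nontrivial takes the value `1` on an even and
nonzero number of the `cⱼ`, since `∏ cⱼ = 1` and the `cⱼ` generate `G`. For the character
vanishing on the rotations, this gives two reflections, i.e. two `nⱼ = 2`, which settles `r = 3`.
For `r = 4`, the two other characters `r ↦ 1, s ↦ 0` and `r ↦ 1, s ↦ 1` are both nonzero only on
odd rotations, which have order `2^e`; without one, each character accounts for two reflections,
so all four `cⱼ` are reflections and `μ = 0`. The generating vector
`(s, sr, r^{2^{e-1}}, r^{2^{e-1}-1})` of signature `(0; 2, 2, 2, 2^e)` attains the bound.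
-/

open scoped commutatorElement

/-- Genus spectrum membership, as in Riemann's Existence Theorem. -/
def IsGenus (G : Type*) [Group G] (g : ℕ) : Prop :=
  2 ≤ g ∧ ∃ (h r : ℕ) (n : Fin r → ℕ) (a b : Fin h → G) (c : Fin r → G),
    (∀ j, 2 ≤ n j) ∧ (∀ j, orderOf (c j) = n j) ∧
    Subgroup.closure (Set.range a ∪ Set.range b ∪ Set.range c) = ⊤ ∧
    (List.ofFn (fun i => ⁅a i, b i⁆)).prod * (List.ofFn c).prod = 1 ∧
    2 * ((g : ℚ) - 1) =
      (Nat.card G : ℚ) * (2 * ((h : ℚ) - 1) + ∑ j, (1 - 1 / (n j : ℚ)))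

open Finset

theorem MonoidHom.two_le_card_filter_ne_one {G : Type*} [Group G]
    {φ : G →* Multiplicative (ZMod 2)} (hφ : φ ≠ 1) {m : ℕ} {c : Fin m → G}
    (hc : Subgroup.closure (Set.range c) = ⊤) (hprod : (List.ofFn c).prod = 1) :
    2 ≤ #{j | φ (c j) ≠ 1} := by
  have heven : ((#{j | φ (c j) ≠ 1} : ℕ) : ZMod 2) = 0 := by
    have hne : ∀ x : Multiplicative (ZMod 2), x ≠ 1 → x = .ofAdd 1 := by decide
    have := congrArg φ hprod
    rw [map_one, map_list_prod, List.map_ofFn, List.prod_ofFn, ← prod_filter_ne_one,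
      prod_eq_pow_card fun j hj => hne _ (mem_filter.1 hj).2] at this
    simpa [← ofAdd_nsmul] using this
  have hpos : #{j | φ (c j) ≠ 1} ≠ 0 := by
    intro h0
    refine hφ (MonoidHom.ker_eq_top_iff.1 (top_le_iff.1 ?_))
    rw [← hc, Subgroup.closure_le, Set.range_subset_iff]
    simpa [filter_eq_empty_iff] using h0
  rw [ZMod.natCast_eq_zero_iff] at heven
  omega

/-- The hyperbolic area, divided by `2π`, of an orbifold of signature `(h; n₁, …, n_m)`. -/
def reducedArea (h : ℕ) {m : ℕ} (n : Fin m → ℕ) : ℚ :=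
  2 * ((h : ℚ) - 1) + ∑ j, (1 - 1 / (n j : ℚ))

section reducedArea

variable {m : ℕ} {n : Fin m → ℕ}

lemma reducedArea_eq (h : ℕ) (n : Fin m → ℕ) :
    reducedArea h n = 2 * ((h : ℚ) - 1) + m - ∑ j, 1 / (n j : ℚ) := by
  simp [reducedArea, sum_sub_distrib, add_sub_assoc]

lemma sum_inv_le_half (hn : ∀ j, 2 ≤ n j) : ∑ j, 1 / (n j : ℚ) ≤ m / 2 := by
  have := sum_le_card_nsmul univ (fun j => 1 / (n j : ℚ)) (1 / 2) fun j _ => by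
    gcongr; exact_mod_cast hn j
  simpa [div_eq_mul_inv] using this

lemma card_eq_two_div_two_le_sum_inv : (#{j | n j = 2} : ℚ) / 2 ≤ ∑ j, 1 / (n j : ℚ) :=
  calc (#{j | n j = 2} : ℚ) / 2 = ∑ j ∈ {j | n j = 2}, 1 / (n j : ℚ) := by
        rw [sum_congr rfl fun j hj => by rw [(mem_filter.1 hj).2]]; simp [div_eq_mul_inv]
    _ ≤ ∑ j, 1 / (n j : ℚ) :=
        sum_le_sum_of_subset_of_nonneg (subset_univ _) fun _ _ _ => by positivity

lemma sum_inv_le_inv_add_half (hn : ∀ j, 2 ≤ n j) (j₀ : Fin m) :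
    ∑ j, 1 / (n j : ℚ) ≤ 1 / n j₀ + (m - 1) / 2 := by
  rw [← add_sum_erase _ _ (mem_univ j₀)]
  have := sum_le_card_nsmul (univ.erase j₀) (fun j => 1 / (n j : ℚ)) (1 / 2) fun j _ => by
    gcongr; exact_mod_cast hn j
  simp only [card_erase_of_mem (mem_univ j₀), card_univ, Fintype.card_fin, nsmul_eq_mul] at this
  push_cast [Nat.one_le_iff_ne_zero.2 (Fin.pos j₀).ne'] at this
  linarith

lemma reducedArea_le_zero_or_half_le (hn : ∀ j, 2 ≤ n j) {h : ℕ} (hh : 1 ≤ h) :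
    reducedArea h n ≤ 0 ∨ 1 / 2 ≤ reducedArea h n := by
  have hT := sum_inv_le_half hn
  have hT₀ : 0 ≤ ∑ j, 1 / (n j : ℚ) := by positivity
  rw [reducedArea_eq]
  rcases Nat.eq_zero_or_pos m with rfl | hm
  · rcases hh.eq_or_lt with rfl | hh
    · left; simp
    · right
      have : (2 : ℚ) ≤ h := by exact_mod_cast hh
      simp only [univ_eq_empty, sum_empty, CharP.cast_eq_zero]
      linarith
  · right
    have : (1 : ℚ) ≤ h := by exact_mod_cast hh
    have : (1 : ℚ) ≤ m := by exact_mod_cast hm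
    linarith

end reducedArea

namespace DihedralGroup

variable {n : ℕ}

def toZModTwo (hn : 2 ∣ n) (a b : ZMod 2) : DihedralGroup n →* Multiplicative (ZMod 2) where
  toFun
    | r i => .ofAdd (a * ZMod.castHom hn _ i)
    | sr i => .ofAdd (a * ZMod.castHom hn _ i + b)
  map_one' := by simp [one_def, -r_zero]
  map_mul' := by
    rintro (i | i) (j | j) <;>
      simp only [r_mul_r, r_mul_sr, sr_mul_r, sr_mul_sr, map_add, map_sub, ← ofAdd_add] <;>
      congr 1 <;>
      generalize ZMod.castHom hn (ZMod 2) i = u <;> generalize ZMod.castHom hn (ZMod 2) j = v <;>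
      revert a b u v <;> decide

@[simp] lemma toZModTwo_r (hn : 2 ∣ n) (a b : ZMod 2) (i : ZMod n) :
    toZModTwo hn a b (r i) = .ofAdd (a * ZMod.castHom hn _ i) := rfl

@[simp] lemma toZModTwo_sr (hn : 2 ∣ n) (a b : ZMod 2) (i : ZMod n) :
    toZModTwo hn a b (sr i) = .ofAdd (a * ZMod.castHom hn _ i + b) := rfl

lemma toZModTwo_ne_one (hn : 2 ∣ n) {a b : ZMod 2} (hab : a ≠ 0 ∨ b ≠ 0) :
    toZModTwo hn a b ≠ 1 := by
  intro h
  rcases hab with ha | hb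
  · have h1 := DFunLike.congr_fun h (r 1)
    rw [toZModTwo_r, map_one] at h1
    exact ha (by simpa using h1)
  · exact hb (by simpa using DFunLike.congr_fun h (sr 0))

lemma two_le_card_orderOf_eq_two (hn : 2 ∣ n) {m : ℕ} {c : Fin m → DihedralGroup n}
    (hc : Subgroup.closure (Set.range c) = ⊤) (hprod : (List.ofFn c).prod = 1) :
    2 ≤ #{j | orderOf (c j) = 2} := by
  refine (MonoidHom.two_le_card_filter_ne_one (toZModTwo_ne_one hn (a := 0) (.inr one_ne_zero))
    hc hprod).trans (card_le_card (monotone_filter_right _ fun j _ hj => ?_))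
  generalize c j = x at hj ⊢
  cases x with
  | r i => simp at hj
  | sr i => exact orderOf_sr i

theorem exists_odd_rotation_or_four_le_card_orderOf_eq_two (hn : 2 ∣ n) {m : ℕ}
    {c : Fin m → DihedralGroup n} (hc : Subgroup.closure (Set.range c) = ⊤)
    (hprod : (List.ofFn c).prod = 1) :
    (∃ j i, c j = r i ∧ ZMod.castHom hn (ZMod 2) i = 1) ∨ 4 ≤ #{j | orderOf (c j) = 2} := by
  by_cases hodd : ∃ j i, c j = r i ∧ ZMod.castHom hn (ZMod 2) i = 1
  · exact .inl hodd
  push Not at hodd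
  set F₁ : Finset (Fin m) := {j | toZModTwo hn 1 0 (c j) ≠ 1}
  set F₂ : Finset (Fin m) := {j | toZModTwo hn 1 1 (c j) ≠ 1}
  have key : ∀ j, (j ∈ F₁ ∨ j ∈ F₂ → orderOf (c j) = 2) ∧ ¬(j ∈ F₁ ∧ j ∈ F₂) := by
    intro j
    simp only [F₁, F₂, mem_filter, mem_univ, true_and]
    cases hcj : c j with
    | r i =>
      have hi : ZMod.castHom hn (ZMod 2) i = 0 := by
        have := hodd j i hcj
        generalize ZMod.castHom hn (ZMod 2) i = u at this ⊢
        revert u; decide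
      simp [hi]
    | sr i =>
      refine ⟨fun _ => orderOf_sr i, ?_⟩
      simp only [toZModTwo_sr]
      generalize ZMod.castHom hn (ZMod 2) i = u
      revert u; decide
  right
  calc 4 ≤ #F₁ + #F₂ :=
        add_le_add
          (MonoidHom.two_le_card_filter_ne_one (toZModTwo_ne_one hn (.inl one_ne_zero)) hc hprod)
          (MonoidHom.two_le_card_filter_ne_one (toZModTwo_ne_one hn (.inl one_ne_zero)) hc hprod)
    _ = #(F₁ ∪ F₂) :=
        (card_union_of_disjoint (disjoint_left.2 fun _ h₁ h₂ => (key _).2 ⟨h₁, h₂⟩)).symm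
    _ ≤ #{j | orderOf (c j) = 2} :=
        card_le_card fun j hj => mem_filter.2 ⟨mem_univ j, (key j).1 (mem_union.1 hj)⟩

lemma closure_sr_zero_sr_one :
    Subgroup.closure {sr 0, sr 1} = (⊤ : Subgroup (DihedralGroup n)) := by
  set H := Subgroup.closure {sr (0 : ZMod n), sr 1}
  have h0 : sr 0 ∈ H := Subgroup.subset_closure (by simp)
  have hr : ∀ i : ZMod n, r i ∈ H := fun i => by
    have h1 : r 1 ∈ H := by
      simpa [sr_mul_sr] using mul_mem h0 (Subgroup.subset_closure (by simp) : sr 1 ∈ H)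
    simpa [r_one_zpow] using zpow_mem h1 (ZMod.cast i : ℤ)
  rw [eq_top_iff]
  rintro (i | i) -
  · exact hr i
  · simpa [sr_mul_r] using mul_mem h0 (hr i)

variable {e : ℕ}

lemma orderOf_r_of_castHom_eq_one (hn : 2 ∣ 2 ^ e) {i : ZMod (2 ^ e)}
    (hi : ZMod.castHom hn (ZMod 2) i = 1) : orderOf (r i) = 2 ^ e := by
  rw [ZMod.castHom_apply, ZMod.cast_eq_val, ZMod.natCast_eq_one_iff_odd] at hi
  rw [orderOf_r, ((Nat.coprime_two_left.2 hi).pow_left e).gcd_eq_one, Nat.div_one]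

lemma orderOf_r_two_pow_pred (he : 1 ≤ e) :
    orderOf (r ((2 ^ (e - 1) : ℕ) : ZMod (2 ^ e))) = 2 := by
  have hlt : 2 ^ (e - 1) < 2 ^ e := Nat.pow_lt_pow_right (by norm_num) (by omega)
  rw [orderOf_r, ZMod.val_natCast, Nat.mod_eq_of_lt hlt,
    Nat.gcd_eq_right (pow_dvd_pow 2 (Nat.sub_le e 1)), Nat.pow_div (Nat.sub_le e 1) two_pos,
    Nat.sub_sub_self he, pow_one]

theorem reducedArea_zero_le_zero_or_le (he : 1 ≤ e) {m : ℕ}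
    {c : Fin m → DihedralGroup (2 ^ e)} (hc : Subgroup.closure (Set.range c) = ⊤)
    (hprod : (List.ofFn c).prod = 1) (hord : ∀ j, 2 ≤ orderOf (c j)) :
    reducedArea 0 (fun j => orderOf (c j)) ≤ 0 ∨
      1 / 2 - 1 / 2 ^ e ≤ reducedArea 0 (fun j => orderOf (c j)) := by
  have hn : 2 ∣ 2 ^ e := dvd_pow_self 2 (by omega)
  have hT := sum_inv_le_half hord
  have hT₂ := card_eq_two_div_two_le_sum_inv (n := fun j => orderOf (c j))
  have hT₀ : 0 ≤ ∑ j, 1 / (orderOf (c j) : ℚ) := by positivity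
  have he' : 0 < 1 / (2 : ℚ) ^ e := by positivity
  rw [reducedArea_eq]
  push_cast
  rcases (by omega : m ≤ 2 ∨ m = 3 ∨ m = 4 ∨ 5 ≤ m) with hm | rfl | rfl | hm
  · left
    have : (m : ℚ) ≤ 2 := by exact_mod_cast hm
    linarith
  · left
    have : (2 : ℚ) ≤ #{j | orderOf (c j) = 2} := by
      exact_mod_cast two_le_card_orderOf_eq_two hn hc hprod
    linarith
  · rcases exists_odd_rotation_or_four_le_card_orderOf_eq_two hn hc hprod with
      ⟨j₀, i, hj₀, hi⟩ | h4
    · right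
      have := sum_inv_le_inv_add_half hord j₀
      rw [hj₀, orderOf_r_of_castHom_eq_one hn hi] at this
      push_cast at this
      linarith
    · left
      have : (4 : ℚ) ≤ #{j | orderOf (c j) = 2} := by exact_mod_cast h4
      linarith
  · right
    have : (5 : ℚ) ≤ m := by exact_mod_cast hm
    linarith

theorem reducedArea_le_zero_or_le (he : 1 ≤ e) {h m : ℕ}
    {a b : Fin h → DihedralGroup (2 ^ e)} {c : Fin m → DihedralGroup (2 ^ e)}
    (hgen : Subgroup.closure (Set.range a ∪ Set.range b ∪ Set.range c) = ⊤)
    (hprod : (List.ofFn (fun i => ⁅a i, b i⁆)).prod * (List.ofFn c).prod = 1)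
    (hord : ∀ j, 2 ≤ orderOf (c j)) :
    reducedArea h (fun j => orderOf (c j)) ≤ 0 ∨
      1 / 2 - 1 / 2 ^ e ≤ reducedArea h (fun j => orderOf (c j)) := by
  rcases Nat.eq_zero_or_pos h with rfl | hh
  · simp only [Set.range_eq_empty, Set.empty_union, List.ofFn_zero, List.prod_nil, one_mul]
      at hgen hprod
    exact reducedArea_zero_le_zero_or_le he hgen hprod hord
  · refine (reducedArea_le_zero_or_half_le hord hh).imp_right fun h => le_trans ?_ h
    have : 0 < 1 / (2 : ℚ) ^ e := by positivity
    linarith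

theorem two_pow_pred_le_of_isGenus (he : 1 ≤ e) {g : ℕ}
    (hg : IsGenus (DihedralGroup (2 ^ e)) g) : 2 ^ (e - 1) ≤ g := by
  obtain ⟨hg, h, m, n, a, b, c, hn, hord, hgen, hprod, hRH⟩ := hg
  obtain rfl : n = fun j => orderOf (c j) := funext fun j => (hord j).symm
  change 2 * ((g : ℚ) - 1) = _ * reducedArea h _ at hRH
  rw [nat_card, Nat.cast_mul, Nat.cast_pow, Nat.cast_ofNat] at hRH
  have hg' : (2 : ℚ) ≤ g := by exact_mod_cast hg
  have hpos : (0 : ℚ) < 2 * 2 ^ e := by positivity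
  rcases reducedArea_le_zero_or_le he hgen hprod hn with hμ | hμ
  · linarith [mul_nonpos_of_nonneg_of_nonpos hpos.le hμ]
  · have hpow : (2 : ℚ) ^ e = 2 * 2 ^ (e - 1) := by rw [← pow_succ', Nat.sub_add_cancel he]
    have hbound : (2 : ℚ) * 2 ^ e * (1 / 2 - 1 / 2 ^ e) = 2 ^ e - 2 := by field_simp
    have := mul_le_mul_of_nonneg_left hμ hpos.le
    have : ((2 ^ (e - 1) : ℕ) : ℚ) ≤ g := by push_cast; linarith
    exact_mod_cast this

theorem isGenus_two_pow_pred (he : 2 ≤ e) : IsGenus (DihedralGroup (2 ^ e)) (2 ^ (e - 1)) := by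
  have hn : 2 ∣ 2 ^ e := dvd_pow_self 2 (by omega)
  set k : ZMod (2 ^ e) := ((2 ^ (e - 1) : ℕ) : ZMod (2 ^ e))
  have hk : ZMod.castHom hn (ZMod 2) k = 0 := by
    rw [map_natCast, ZMod.natCast_eq_zero_iff]; exact dvd_pow_self 2 (by omega)
  have h2k : k + k = 0 := by
    rw [← Nat.cast_add, ← two_mul, ← pow_succ', Nat.sub_add_cancel (by omega : 1 ≤ e),
      ZMod.natCast_self]
  have hpow : (2 : ℚ) ^ e = 2 * 2 ^ (e - 1) := by rw [← pow_succ', Nat.sub_add_cancel (by omega)]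
  refine ⟨?_, 0, 4, ![2, 2, 2, 2 ^ e], ![], ![], ![sr 0, sr 1, r k, r (k - 1)],
    ?_, ?_, ?_, ?_, ?_⟩
  · calc 2 = 2 ^ 1 := rfl
      _ ≤ 2 ^ (e - 1) := Nat.pow_le_pow_right two_pos (by omega)
  · have : 2 ≤ 2 ^ e := Nat.le_self_pow (by omega) 2
    intro j; fin_cases j <;> simp [this]
  · intro j; fin_cases j
    · exact orderOf_sr 0
    · exact orderOf_sr 1
    · exact orderOf_r_two_pow_pred (by omega)
    · exact orderOf_r_of_castHom_eq_one hn (by rw [map_sub, hk, map_one]; decide)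
  · exact eq_top_iff.2 (closure_sr_zero_sr_one.ge.trans
      (Subgroup.closure_mono (by simp [Set.insert_subset_iff])))
  · change 1 * (sr 0 * (sr 1 * (r k * (r (k - 1) * 1)))) = 1
    rw [mul_one, one_mul, r_mul_r, sr_mul_r, sr_mul_sr, ← r_zero]
    congr 1
    linear_combination h2k
  · rw [nat_card]
    rw [Fin.sum_univ_four]
    norm_num [hpow, Matrix.cons_val_two, Matrix.cons_val_three]
    field_simp
    ring

end DihedralGroup

/-- The minimum genus of the dihedral group of order `2^(e+1)`, for `e ≥ 5`,
equals `2^(e-1)`. -/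
theorem stmt8 (e : ℕ) (he : 5 ≤ e) :
    IsGenus (DihedralGroup (2 ^ e)) (2 ^ (e - 1)) ∧
      ∀ g : ℕ, IsGenus (DihedralGroup (2 ^ e)) g → 2 ^ (e - 1) ≤ g :=
  ⟨DihedralGroup.isGenus_two_pow_pred (by omega),
    fun _ => DihedralGroup.two_pow_pred_le_of_isGenus (by omega)⟩
end

section
/- Let e ≥ 5. If nonnegative integers h, m_1, …, m_e satisfy (e−1)·2^e + 2 = 2^{e+1}·h + ∑_{i=1}^e (2^e − 2^{e−i})·m_i, then m_e is even and m_e < 4; that is, m_e ∈ {0, 2}. -/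
/-! Moving the terms `2^(e-i) m_i` to the left gives
`(e-1) 2^e + 2 + N = 2^(e+1) h + 2^e M`, where `N = ∑ 2^(e-i) m_i = 2 R + m_e`,
`M = ∑ m_i = M' + m_e`, and `R = ∑_{i<e} 2^(e-1-i) m_i`, `M' = ∑_{i<e} m_i`.
So `m_e = 2 n` is even, and `R + n + 1 = 2^(e-1) T` with `T + e - 1 = 2 h + M' + 2 n`.
Now `R + n = 2^(e-1) T - 1` is a sum of `M' + n` powers of two, none exceeding `2^(e-1)`, while
every such representation has at least `T - 1 + (e - 1)` summands: `T - 1` copies of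
`2^(e-1)` plus the `e - 1` binary ones of `2^(e-1) - 1`.
Hence `T + e - 2 ≤ T + e - 1 - 2 h - n`, so `n ≤ 1`. -/

/-- `twoPowCount k x = x / 2^k + (number of binary ones of x % 2^k)`, the least number of
powers of two, each at most `2^k`, that sum to `x`. -/
def twoPowCount : ℕ → ℕ → ℕ
  | 0, x => x
  | k + 1, x => x % 2 + twoPowCount k (x / 2)

theorem twoPowCount_zero_right (k : ℕ) : twoPowCount k 0 = 0 := by
  induction k with
  | zero => rfl
  | succ k ih => simp [twoPowCount, ih]

theorem twoPowCount_one_right (k : ℕ) : twoPowCount k 1 = 1 := by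
  cases k <;> simp [twoPowCount, twoPowCount_zero_right]

theorem twoPowCount_add_le (k x y : ℕ) :
    twoPowCount k (x + y) ≤ twoPowCount k x + twoPowCount k y := by
  induction k generalizing x y with
  | zero => exact le_rfl
  | succ k ih =>
    simp only [twoPowCount]
    by_cases hcarry : x % 2 + y % 2 < 2
    · rw [show (x + y) / 2 = x / 2 + y / 2 by omega, show (x + y) % 2 = x % 2 + y % 2 by omega]
      have := ih (x / 2) (y / 2)
      omega
    · rw [show (x + y) / 2 = x / 2 + y / 2 + 1 by omega, show (x + y) % 2 = 0 by omega]
      have := ih (x / 2 + y / 2) 1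
      have := ih (x / 2) (y / 2)
      rw [twoPowCount_one_right] at *
      omega

theorem twoPowCount_two_pow {k a : ℕ} (ha : a ≤ k) : twoPowCount k (2 ^ a) = 1 := by
  induction k generalizing a with
  | zero => simp_all [twoPowCount]
  | succ k ih =>
    cases a with
    | zero => exact twoPowCount_one_right _
    | succ a => simp [twoPowCount, pow_succ, ih (Nat.le_of_succ_le_succ ha)]

theorem twoPowCount_sum_le {ι : Type*} (k : ℕ) (s : Finset ι) (f : ι → ℕ) :
    twoPowCount k (∑ i ∈ s, f i) ≤ ∑ i ∈ s, twoPowCount k (f i) :=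
  Finset.le_sum_of_subadditive _ (twoPowCount_zero_right k).le (twoPowCount_add_le k) s f

theorem twoPowCount_two_pow_mul_le {k a : ℕ} (ha : a ≤ k) (c : ℕ) :
    twoPowCount k (2 ^ a * c) ≤ c := by
  simpa [twoPowCount_two_pow ha, mul_comm] using
    twoPowCount_sum_le k (Finset.range c) fun _ => 2 ^ a

theorem twoPowCount_le_self (k x : ℕ) : twoPowCount k x ≤ x := by
  simpa using twoPowCount_two_pow_mul_le k.zero_le x

theorem twoPowCount_sum_two_pow_mul_le {ι : Type*} {k : ℕ} {s : Finset ι} {a : ι → ℕ}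
    (ha : ∀ i ∈ s, a i ≤ k) (c : ι → ℕ) :
    twoPowCount k (∑ i ∈ s, 2 ^ a i * c i) ≤ ∑ i ∈ s, c i :=
  (twoPowCount_sum_le k s _).trans
    (Finset.sum_le_sum fun i hi => twoPowCount_two_pow_mul_le (ha i hi) (c i))

theorem twoPowCount_add_one_of_succ_eq_two_pow_mul {k x T : ℕ} (h : x + 1 = 2 ^ k * T) :
    twoPowCount k x + 1 = T + k := by
  induction k generalizing x with
  | zero => simp_all [twoPowCount]
  | succ k ih =>
    rw [pow_succ, mul_right_comm] at h
    simp only [twoPowCount]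
    have := ih (x := x / 2) (by omega)
    omega

theorem Finset.sum_tsub_mul_add_sum_mul {ι : Type*} {s : Finset ι} {a : ℕ} {b : ι → ℕ}
    (hb : ∀ i ∈ s, b i ≤ a) (c : ι → ℕ) :
    ∑ i ∈ s, (a - b i) * c i + ∑ i ∈ s, b i * c i = a * ∑ i ∈ s, c i := by
  rw [← Finset.sum_add_distrib, Finset.mul_sum]
  exact Finset.sum_congr rfl fun i hi => by rw [← add_mul, Nat.sub_add_cancel (hb i hi)]

theorem sum_Icc_succ_two_pow_sub_mul (k : ℕ) (m : ℕ → ℕ) :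
    ∑ i ∈ Finset.Icc 1 (k + 1), 2 ^ (k + 1 - i) * m i =
      2 * ∑ i ∈ Finset.Icc 1 k, 2 ^ (k - i) * m i + m (k + 1) := by
  rw [Finset.sum_Icc_succ_top (by omega), Finset.mul_sum, Nat.sub_self, pow_zero, one_mul]
  congr 1
  refine Finset.sum_congr rfl fun i hi => ?_
  rw [Finset.mem_Icc] at hi
  rw [show k + 1 - i = k - i + 1 by omega, pow_succ]
  ring

theorem add_sum_two_pow_mul_eq {e h : ℕ} {m : ℕ → ℕ}
    (heq : (e - 1) * 2 ^ e + 2 =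
      2 ^ (e + 1) * h + ∑ i ∈ Finset.Icc 1 e, (2 ^ e - 2 ^ (e - i)) * m i) :
    (e - 1) * 2 ^ e + 2 + ∑ i ∈ Finset.Icc 1 e, 2 ^ (e - i) * m i =
      2 ^ (e + 1) * h + 2 ^ e * ∑ i ∈ Finset.Icc 1 e, m i := by
  rw [heq, add_assoc, Finset.sum_tsub_mul_add_sum_mul]
  exact fun i _ => Nat.pow_le_pow_right two_pos (Nat.sub_le e i)

/-- Lemma 3.8: in any solution of
`(e-1)·2^e + 2 = 2^(e+1)·h + ∑_{i=1}^e (2^e - 2^(e-i))·m_i`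
the multiplicity `m_e` is even and less than `4`. -/
theorem stmt13 (e : ℕ) (he : 5 ≤ e) (h : ℕ) (m : ℕ → ℕ)
    (heq : (e - 1) * 2 ^ e + 2 =
      2 ^ (e + 1) * h + ∑ i ∈ Finset.Icc 1 e, (2 ^ e - 2 ^ (e - i)) * m i) :
    Even (m e) ∧ m e < 4 := by
  obtain ⟨k, rfl⟩ : ∃ k, e = k + 1 := ⟨e - 1, by omega⟩
  have hbal := add_sum_two_pow_mul_eq heq
  rw [sum_Icc_succ_two_pow_sub_mul, Finset.sum_Icc_succ_top (by omega) m, Nat.add_sub_cancel,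
    pow_succ 2 (k + 1), pow_succ 2 k] at hbal
  set R := ∑ i ∈ Finset.Icc 1 k, 2 ^ (k - i) * m i
  set M := ∑ i ∈ Finset.Icc 1 k, m i
  obtain ⟨n, hn⟩ : Even (m (k + 1)) := by
    simpa [Nat.even_add, Nat.even_mul, parity_simps] using congrArg Even hbal
  have hT : R + n + 1 + 2 ^ k * k = 2 ^ k * (2 * h + M + 2 * n) := by
    rw [hn] at hbal
    linarith
  obtain ⟨T, hRT⟩ : 2 ^ k ∣ R + n + 1 :=
    (Nat.dvd_add_left (dvd_mul_right _ _)).mp (hT ▸ dvd_mul_right _ _)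
  have hTk : T + k = 2 * h + M + 2 * n :=
    Nat.eq_of_mul_eq_mul_left (Nat.two_pow_pos k) (by rw [mul_add, ← hRT, hT])
  have hcount : twoPowCount k (R + n) ≤ M + n :=
    (twoPowCount_add_le k R n).trans <| add_le_add
      (twoPowCount_sum_two_pow_mul_le (fun i _ => Nat.sub_le k i) m) (twoPowCount_le_self k n)
  have := twoPowCount_add_one_of_succ_eq_two_pow_mul hRT
  exact ⟨⟨n, hn⟩, by omega⟩
end

section
/- Let e ≥ 5. If nonnegative integers h, m_1, …, m_e satisfy (e−1)·2^e + 2 = 2^{e+1}·h + ∑_{i=1}^e (2^e − 2^{e−i})·m_i and m_e = 2, then necessarily h = 0, m_{e−1} = 0, and m_i = 1 for all 1 ≤ i ≤ e−2. -/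
/-!
Adding `∑ 2 ^ (e - i) * m i` to both sides and dividing by two, the hypothesis says that
`(K + 1) * 2 ^ (e - 1) - 1 = ∑_{j < e - 1} 2 ^ j * c j` for `K = 2 h + ∑_{1 ≤ i < e} m i + 1 - (e - 1)`
and the "binary digits" `c = (m (e - 1) + 1, m (e - 2), …, m 1)`, whose digit sum is
`∑_{1 ≤ i < e} m i + 1 = e + K - 2 h - 1`. Carrying shows that such a representation has digit sum at
least `(e - 1) + 2 K`, so `h = K = 0`, and `2 ^ (e - 1) - 1` has only one representation with
`e - 1` digits of total `e - 1`: all digits equal to `1`.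
-/

open Finset

theorem Finset.sum_Icc_one_eq_sum_range_sub {M : Type*} [AddCommMonoid M] (f : ℕ → M) (n : ℕ) :
    ∑ i ∈ Icc 1 n, f i = ∑ j ∈ range n, f (n - j) := by
  rw [← Nat.Ico_zero_eq_range, sum_Ico_reflect f 0 n.le_succ, Nat.add_sub_cancel_left,
    ← Finset.Ico_add_one_right_eq_Icc, Nat.sub_zero]

theorem Nat.cast_sum_Icc_two_pow_sub_two_pow_mul (e : ℕ) (m : ℕ → ℕ) :
    ((∑ i ∈ Icc 1 e, (2 ^ e - 2 ^ (e - i)) * m i : ℕ) : ℤ) =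
      2 ^ e * ∑ i ∈ Icc 1 e, (m i : ℤ) - ∑ i ∈ Icc 1 e, 2 ^ (e - i) * (m i : ℤ) := by
  rw [mul_sum, ← sum_sub_distrib, Nat.cast_sum]
  refine sum_congr rfl fun i _ => ?_
  rw [Nat.cast_mul, Nat.cast_sub (Nat.pow_le_pow_right two_pos (Nat.sub_le e i))]
  push_cast
  ring

/-- The bound is attained by the digits `1, …, 1, 2 * K + 1`. -/
theorem nonneg_and_add_two_mul_le_sum_of_sum_two_pow_mul_add_one_eq (c : ℕ → ℤ)
    (hc : ∀ j, 0 ≤ c j) :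
    ∀ (n : ℕ) (K : ℤ), ∑ j ∈ range n, 2 ^ j * c j + 1 = (K + 1) * 2 ^ n →
      0 ≤ K ∧ n + 2 * K ≤ ∑ j ∈ range n, c j := by
  intro n
  induction n with
  | zero => intro K hK; simp at hK; simp; omega
  | succ n ih =>
    intro K hK
    rw [sum_range_succ, pow_succ] at hK
    obtain ⟨hK', hle⟩ := ih (2 * K + 1 - c n) (by linear_combination hK)
    rw [sum_range_succ]
    have := hc n
    push_cast
    omega

theorem eq_one_of_sum_two_pow_mul_add_one_eq_two_pow (c : ℕ → ℤ) (hc : ∀ j, 0 ≤ c j) :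
    ∀ n : ℕ, ∑ j ∈ range n, 2 ^ j * c j + 1 = 2 ^ n → ∑ j ∈ range n, c j ≤ n →
      ∀ j < n, c j = 1 := by
  intro n
  induction n with
  | zero => simp
  | succ n ih =>
    intro hsum hle j hj
    rw [sum_range_succ] at hsum hle
    push_cast at hle
    have hlow : ∑ j ∈ range n, 2 ^ j * c j + 1 = (1 - c n + 1) * 2 ^ n := by
      rw [pow_succ] at hsum
      linear_combination hsum
    obtain ⟨hcn, hbound⟩ :=
      nonneg_and_add_two_mul_le_sum_of_sum_two_pow_mul_add_one_eq c hc n _ hlow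
    have hcn_one : c n = 1 := by omega
    rcases Nat.lt_succ_iff_lt_or_eq.mp hj with hj | rfl
    · exact ih (by simpa [hcn_one] using hlow) (by omega) j hj
    · exact hcn_one

theorem sum_two_pow_mul_sub_add_two_eq (n h : ℕ) (m : ℕ → ℕ)
    (heq : n * 2 ^ (n + 1) + 2 =
      2 ^ (n + 2) * h + ∑ i ∈ Icc 1 (n + 1), (2 ^ (n + 1) - 2 ^ (n + 1 - i)) * m i)
    (hme : m (n + 1) = 2) :
    ∑ j ∈ range n, 2 ^ j * (m (n - j) : ℤ) + 2 =
      (2 * h + ∑ j ∈ range n, (m (n - j) : ℤ) + 2 - n) * 2 ^ n := by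
  have hdouble : ∑ j ∈ range n, 2 ^ (n + 1 - (n - j)) * (m (n - j) : ℤ) =
      2 * ∑ j ∈ range n, 2 ^ j * (m (n - j) : ℤ) := by
    rw [mul_sum]
    refine sum_congr rfl fun j hj => ?_
    rw [show n + 1 - (n - j) = j + 1 by grind, pow_succ]
    ring
  have hcast := congrArg (Nat.cast : ℕ → ℤ) heq
  simp only [Nat.cast_add, Nat.cast_mul, Nat.cast_sum_Icc_two_pow_sub_two_pow_mul] at hcast
  rw [sum_Icc_succ_top (by omega), sum_Icc_succ_top (by omega), sum_Icc_one_eq_sum_range_sub,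
    sum_Icc_one_eq_sum_range_sub, hdouble, hme, Nat.sub_self] at hcast
  push_cast at hcast
  apply mul_left_cancel₀ (two_ne_zero (α := ℤ))
  linear_combination hcast

/-- Lemma 3.9: if `(e-1)·2^e + 2 = 2^(e+1)·h + ∑_{i=1}^e (2^e - 2^(e-i))·m_i`
and `m_e = 2`, then `h = 0`, `m_{e-1} = 0` and `m_i = 1` for `1 ≤ i ≤ e-2`. -/
theorem stmt14 (e : ℕ) (he : 5 ≤ e) (h : ℕ) (m : ℕ → ℕ)
    (heq : (e - 1) * 2 ^ e + 2 =
      2 ^ (e + 1) * h + ∑ i ∈ Finset.Icc 1 e, (2 ^ e - 2 ^ (e - i)) * m i)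
    (hme : m e = 2) :
    h = 0 ∧ m (e - 1) = 0 ∧ ∀ i, 1 ≤ i → i ≤ e - 2 → m i = 1 := by
  obtain ⟨n, rfl⟩ : ∃ n, e = n + 1 := ⟨e - 1, by omega⟩
  have hn : 0 < n := by omega
  set M : ℤ := ∑ j ∈ range n, (m (n - j) : ℤ)
  rw [Nat.add_sub_cancel] at heq
  have hmain := sum_two_pow_mul_sub_add_two_eq n h m heq hme
  set c : ℕ → ℤ := fun j => m (n - j) + if j = 0 then 1 else 0
  have hc : ∀ j, 0 ≤ c j := fun j => by positivity
  have hcsum : ∑ j ∈ range n, c j = M + 1 := by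
    simp [c, M, sum_add_distrib, hn]
  have hcgeom : ∑ j ∈ range n, 2 ^ j * c j + 1 = (2 * h + M + 1 - n + 1) * 2 ^ n := by
    simp only [c, mul_add, sum_add_distrib, mul_ite, mul_one, mul_zero, sum_ite_eq', mem_range,
      hn, if_true, pow_zero]
    linear_combination hmain
  obtain ⟨hK, hle⟩ := nonneg_and_add_two_mul_le_sum_of_sum_two_pow_mul_add_one_eq c hc n _ hcgeom
  have hK0 : 2 * (h : ℤ) + M + 1 - n = 0 := by omega
  have hone := eq_one_of_sum_two_pow_mul_add_one_eq_two_pow c hc n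
    (by rw [hcgeom, hK0, zero_add, one_mul]) (by omega)
  refine ⟨by omega, by simpa [c] using hone 0 hn, fun i hi1 hi2 => ?_⟩
  simpa [c, Nat.sub_sub_self (by omega : i ≤ n), show n - i ≠ 0 by omega]
    using hone (n - i) (by omega)
end

section
/- Let e ≥ 5. If nonnegative integers h, m_1, …, m_e satisfy (e−1)·2^e + 2 = 2^{e+1}·h + ∑_{i=1}^e (2^e − 2^{e−i})·m_i and m_e = 0, then necessarily h = 0 and m_1 ≤ 3. -/
/-!
Put `n j := m (e - 1 - j)`, `N := ∑ 2^j n_j` and `M := ∑ n_j`. Since `m_e = 0`, the equation says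
`N + 1 = K · 2^(e-1)` with `K = 2h + M - (e - 1) ≥ 1`. Writing `K · 2^(e-1) - 1` as a sum of powers
`2^j` with `j ≤ e - 2` takes at least `2K + e - 3` summands (all `e - 1` binary digits of
`2^(e-1) - 1`, plus two copies of `2^(e-2)` for each further unit of `K`), so `M ≥ 2K + e - 3`.
This forces `h = 0` and `K ≤ 2`, hence `2^(e-2) m_1 ≤ N < 2^e`.
-/

open Finset

/-- Induction on `t`: `n 0` is odd, and moving `n 0 / 2` units into `n 1` halves the equation at the
cost of at least one summand. -/
theorem two_mul_add_le_sum_add_one {t K : ℕ} {n : ℕ → ℕ}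
    (h : ∑ j ∈ range (t + 1), 2 ^ j * n j + 1 = K * 2 ^ (t + 1)) :
    2 * K + t ≤ ∑ j ∈ range (t + 1), n j + 1 := by
  induction t generalizing n with
  | zero => simp only [zero_add, range_one, sum_singleton, pow_zero, one_mul, pow_one] at h ⊢; omega
  | succ t ih =>
    rw [sum_range_succ'] at h ⊢
    have hhalf : ∑ j ∈ range (t + 1), 2 ^ (j + 1) * n (j + 1) =
        2 * ∑ j ∈ range (t + 1), 2 ^ j * n (j + 1) := by
      rw [mul_sum]; exact sum_congr rfl fun j _ => by ring
    have hpow : K * 2 ^ (t + 1 + 1) = 2 * (K * 2 ^ (t + 1)) := by ring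
    rw [hhalf, hpow, pow_zero, one_mul] at h
    set a := n 0 / 2
    have hcarry := @ih (fun j => n (j + 1) + if j = 0 then a else 0) (by
      simp only [mul_add, sum_add_distrib, mul_ite, mul_zero, sum_ite_eq', mem_range,
        Nat.zero_lt_succ, if_true, pow_zero, one_mul]
      omega)
    simp only [sum_add_distrib, sum_ite_eq', mem_range, Nat.zero_lt_succ, if_true] at hcarry
    omega

theorem sum_range_two_pow_sub_mul_add {t : ℕ} (n : ℕ → ℕ) :
    ∑ j ∈ range (t + 1), (2 ^ (t + 2) - 2 ^ (j + 1)) * n j + 2 * ∑ j ∈ range (t + 1), 2 ^ j * n j =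
      2 ^ (t + 2) * ∑ j ∈ range (t + 1), n j := by
  rw [mul_sum, mul_sum, ← sum_add_distrib]
  refine sum_congr rfl fun j hj => ?_
  have hle : 2 ^ (j + 1) ≤ 2 ^ (t + 2) :=
    Nat.pow_le_pow_right two_pos (by have := mem_range.mp hj; omega)
  rw [← mul_assoc, ← pow_succ', ← add_mul, Nat.sub_add_cancel hle]

theorem eq_zero_and_le_three_of_sum_eq {t h : ℕ} {n : ℕ → ℕ}
    (heq : (t + 1) * 2 ^ (t + 2) + 2 =
      2 ^ (t + 3) * h + ∑ j ∈ range (t + 1), (2 ^ (t + 2) - 2 ^ (j + 1)) * n j) :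
    h = 0 ∧ n t ≤ 3 := by
  have hsplit := sum_range_two_pow_sub_mul_add (t := t) n
  set N := ∑ j ∈ range (t + 1), 2 ^ j * n j
  set M := ∑ j ∈ range (t + 1), n j
  have hscaled : 2 * (N + 1) + 2 ^ (t + 2) * (t + 1) = 2 ^ (t + 2) * (2 * h + M) := by
    rw [show 2 ^ (t + 3) = 2 * 2 ^ (t + 2) by ring] at heq; linarith
  have hgt : t + 1 < 2 * h + M := by
    by_contra! hle
    have := Nat.mul_le_mul_left (2 ^ (t + 2)) hle
    omega
  obtain ⟨K, hK⟩ : ∃ K, 2 * h + M = t + 1 + (K + 1) := ⟨2 * h + M - (t + 2), by omega⟩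
  have hN : N + 1 = (K + 1) * 2 ^ (t + 1) := by
    rw [hK, mul_add, pow_succ] at hscaled; linarith
  have hcount := two_mul_add_le_sum_add_one hN
  have hK_le : K ≤ 1 := by omega
  refine ⟨by omega, ?_⟩
  have hterm : 2 ^ t * n t ≤ N :=
    single_le_sum (f := fun j => 2 ^ j * n j) (fun _ _ => Nat.zero_le _) (self_mem_range_succ t)
  have hbound : N + 1 ≤ 2 ^ t * 4 := by
    rw [hN, show 2 ^ t * 4 = 2 * 2 ^ (t + 1) by ring]
    exact Nat.mul_le_mul_right _ (by omega)
  by_contra! hlarge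
  have := Nat.mul_le_mul_left (2 ^ t) hlarge
  omega

theorem sum_Icc_one_eq_sum_range_reflect_add {M : Type*} [AddCommMonoid M] (t : ℕ) (f : ℕ → M) :
    ∑ i ∈ Icc 1 (t + 2), f i = ∑ j ∈ range (t + 1), f (t + 1 - j) + f (t + 2) := by
  rw [sum_Icc_succ_top (by omega), ← Ico_add_one_right_eq_Icc, sum_Ico_eq_sum_range,
    ← sum_range_reflect]
  congr 1
  exact sum_congr rfl fun j hj => by have := mem_range.mp hj; congr 1; omega

/-- Lemma 3.10: if `(e-1)·2^e + 2 = 2^(e+1)·h + ∑_{i=1}^e (2^e - 2^(e-i))·m_i`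
and `m_e = 0`, then `h = 0` and `m_1 ≤ 3`. -/
theorem stmt15 (e : ℕ) (he : 5 ≤ e) (h : ℕ) (m : ℕ → ℕ)
    (heq : (e - 1) * 2 ^ e + 2 =
      2 ^ (e + 1) * h + ∑ i ∈ Finset.Icc 1 e, (2 ^ e - 2 ^ (e - i)) * m i)
    (hme : m e = 0) :
    h = 0 ∧ m 1 ≤ 3 := by
  obtain ⟨t, rfl⟩ : ∃ t, e = t + 2 := ⟨e - 2, by omega⟩
  rw [sum_Icc_one_eq_sum_range_reflect_add, hme, mul_zero, add_zero] at heq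
  have hreindex : ∀ j ∈ range (t + 1), (2 ^ (t + 2) - 2 ^ (t + 2 - (t + 1 - j))) * m (t + 1 - j) =
      (2 ^ (t + 2) - 2 ^ (j + 1)) * m (t + 1 - j) := fun j hj => by
    have := mem_range.mp hj; congr 3; omega
  rw [sum_congr rfl hreindex, show t + 2 - 1 = t + 1 by omega] at heq
  have key := eq_zero_and_le_three_of_sum_eq (n := fun j => m (t + 1 - j)) heq
  simpa only [add_tsub_cancel_left] using key
end

section
/- Let k ≥ 2 and let n_1, n_2, …, n_k be integers with n_i ≥ 2 for all i and gcd(n_1, …, n_k) = 1. Suppose d ≥ 1 is an integer dividing each of n_2, …, n_k with n_j/d ≥ 2 for all 2 ≤ j ≤ k. Then f(n_1, n_2, …, n_k) = d · f(n_1, n_2/d, …, n_k/d) + n_1·(d − 1), where f(m_1, …, m_k) denotes the Frobenius number, i.e., the largest natural number not expressible as ∑_{i=1}^k x_i m_i with nonnegative integers x_i. -/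
/-!
With `a = n 0` and `T` the numbers represented by `n 1 / d, …, n k / d`, the numbers represented
by `n` form `ℕa + dT` and those represented by the reduced tuple form `ℕa + T`. As `a` is a unit
mod `d`, every `M` is `x a + d N` with `x < d`, and then `M ∈ ℕa + dT` iff `N ∈ ℕa + T`.
The largest `M` outside `ℕa + dT` thus has `x = d - 1` and `N = F'`.
-/

open Pointwise

namespace Frobenius

def combinations {ι : Type*} [Fintype ι] (m : ι → ℕ) : Set ℕ :=
  {M | ∃ x : ι → ℕ, M = ∑ i, x i * m i}

theorem combinations_fin_succ {k : ℕ} (m : Fin (k + 1) → ℕ) :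
    combinations m = Set.range (· * m 0) + combinations (fun i : Fin k => m i.succ) := by
  ext M
  simp only [combinations, Set.mem_add, Set.mem_ofPred_eq, Set.exists_range_iff,
    Fin.exists_fin_succ_pi, Fin.sum_univ_succ, Fin.cons_zero, Fin.cons_succ]
  constructor
  · rintro ⟨x, y, rfl⟩
    exact ⟨x, _, ⟨y, rfl⟩, rfl⟩
  · rintro ⟨x, _, ⟨y, rfl⟩, rfl⟩
    exact ⟨x, y, rfl⟩

theorem combinations_mul_left {ι : Type*} [Fintype ι] (d : ℕ) (m : ι → ℕ) :
    combinations (fun i => d * m i) = (d * ·) '' combinations m := by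
  ext M
  have hsum (x : ι → ℕ) : ∑ i, x i * (d * m i) = d * ∑ i, x i * m i := by
    rw [Finset.mul_sum]
    exact Finset.sum_congr rfl fun i _ => mul_left_comm _ _ _
  simp only [combinations, Set.mem_image, Set.mem_ofPred_eq, hsum]
  constructor
  · rintro ⟨x, rfl⟩
    exact ⟨_, ⟨x, rfl⟩, rfl⟩
  · rintro ⟨_, ⟨x, rfl⟩, rfl⟩
    exact ⟨x, rfl⟩

theorem exists_lt_mul_modEq {a d : ℕ} (had : a.Coprime d) (hd : 0 < d) (M : ℕ) :
    ∃ x < d, x * a ≡ M [MOD d] := by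
  have : NeZero d := ⟨hd.ne'⟩
  refine ⟨((M : ZMod d) * ↑(ZMod.unitOfCoprime a had)⁻¹).val, ZMod.val_lt _, ?_⟩
  rw [← ZMod.natCast_eq_natCast_iff, Nat.cast_mul, ZMod.natCast_zmod_val, ← ZMod.coe_unitOfCoprime a had, mul_assoc,
    Units.inv_mul, mul_one]

variable {a d : ℕ} {T : Set ℕ}

theorem mem_range_mul_add {M : ℕ} :
    M ∈ Set.range (· * a) + T ↔ ∃ x, ∃ t ∈ T, M = x * a + t := by
  simp only [Set.mem_add, Set.exists_range_iff, eq_comm]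

theorem mul_add_mul_mem_range_mul_add_image {N : ℕ} (hN : N ∈ Set.range (· * a) + T) (x : ℕ) :
    x * a + d * N ∈ Set.range (· * a) + (d * ·) '' T := by
  obtain ⟨y, t, ht, rfl⟩ := mem_range_mul_add.1 hN
  exact mem_range_mul_add.2 ⟨x + d * y, d * t, Set.mem_image_of_mem _ ht, by ring⟩

theorem mem_range_mul_add_of_mul_add_mem (had : a.Coprime d) (hd : 0 < d) {N : ℕ}
    (hN : d * N + a * (d - 1) ∈ Set.range (· * a) + (d * ·) '' T) :
    N ∈ Set.range (· * a) + T := by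
  obtain ⟨x, _, ⟨t, ht, rfl⟩, hx⟩ := mem_range_mul_add.1 hN
  have hxmod : x % d = d - 1 := by
    have : a * (d - 1) ≡ a * x [MOD d] :=
      calc a * (d - 1) ≡ d * N + a * (d - 1) [MOD d] :=
            (Nat.add_modEq_right_iff.2 (dvd_mul_right d N)).symm
        _ = a * x + d * t := by rw [hx, mul_comm x]
        _ ≡ a * x [MOD d] := Nat.add_modEq_left_iff.2 (dvd_mul_right d t)
    rw [← Nat.mod_eq_of_lt (Nat.sub_lt hd one_pos)]
    exact (Nat.ModEq.cancel_left_of_coprime had.symm.gcd_eq_one this).symm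
  refine mem_range_mul_add.2 ⟨x / d, t, ht, Nat.eq_of_mul_eq_mul_left hd ?_⟩
  have hxd := Nat.div_add_mod x d
  rw [hxmod] at hxd
  nlinarith

-- `(d * ·) '' T` rather than `d • T`, which for `T : Set ℕ` would mean `T + ⋯ + T`.
theorem isGreatest_compl_range_mul_add_image (had : a.Coprime d) (hd : 0 < d) {F : ℕ}
    (hF : IsGreatest (Set.range (· * a) + T)ᶜ F) :
    IsGreatest (Set.range (· * a) + (d * ·) '' T)ᶜ (d * F + a * (d - 1)) := by
  refine ⟨fun h => hF.1 (mem_range_mul_add_of_mul_add_mem had hd h), fun M hM => ?_⟩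
  by_contra! hlt
  obtain ⟨x, hxd, hx⟩ := exists_lt_mul_modEq had hd M
  have hxa : x * a ≤ a * (d - 1) := by
    rw [mul_comm]
    exact Nat.mul_le_mul_left _ (by omega)
  obtain ⟨N, hN⟩ : d ∣ M - x * a := (Nat.modEq_iff_dvd' (by omega)).1 hx
  have hMN : M = x * a + d * N := by omega
  have hFN : F < N := Nat.lt_of_mul_lt_mul_left (a := d) (by omega)
  have hNT : N ∈ Set.range (· * a) + T := by
    by_contra hNT
    exact absurd (hF.2 hNT) (not_le.2 hFN)
  exact hM (hMN ▸ mul_add_mul_mem_range_mul_add_image hNT x)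

end Frobenius

theorem Finset.coprime_of_gcd_eq_one {ι : Type*} {s : Finset ι} {f : ι → ℕ} (hs : s.gcd f = 1)
    {i : ι} (hi : i ∈ s) {d : ℕ} (hd : ∀ j ∈ s, j ≠ i → d ∣ f j) : (f i).Coprime d := by
  refine Nat.dvd_one.1 (hs ▸ Finset.dvd_gcd fun j hj => ?_)
  rcases eq_or_ne j i with rfl | hji
  · exact Nat.gcd_dvd_left _ _
  · exact (Nat.gcd_dvd_right _ _).trans (hd j hj hji)

theorem stmt16_general (k : ℕ) (n : Fin (k + 1) → ℕ)
    (hgcd : Finset.univ.gcd n = 1)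
    (d : ℕ) (hd : 1 ≤ d) (hdvd : ∀ i : Fin (k + 1), i ≠ 0 → d ∣ n i)
    (F F' : ℕ)
    (hF : IsGreatest {M : ℕ | ¬ ∃ x : Fin (k + 1) → ℕ, M = ∑ i, x i * n i} F)
    (hF' : IsGreatest
      {M : ℕ | ¬ ∃ x : Fin (k + 1) → ℕ,
        M = ∑ i, x i * (if i = 0 then n i else n i / d)} F') :
    F = d * F' + n 0 * (d - 1) := by
  have hcop : (n 0).Coprime d :=
    Finset.coprime_of_gcd_eq_one hgcd (Finset.mem_univ 0) fun j _ => hdvd j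
  set T := Frobenius.combinations fun i : Fin k => n i.succ / d
  have hT' : Frobenius.combinations (fun i => if i = 0 then n i else n i / d) =
      Set.range (· * n 0) + T := by
    simp only [Frobenius.combinations_fin_succ, Fin.succ_ne_zero, if_true, if_false, T]
  have hT : Frobenius.combinations n = Set.range (· * n 0) + (d * ·) '' T := by
    rw [Frobenius.combinations_fin_succ, ← Frobenius.combinations_mul_left]
    congr with i
    exact (Nat.mul_div_cancel' (hdvd _ i.succ_ne_zero)).symm
  have hF'T : IsGreatest (Set.range (· * n 0) + T)ᶜ F' := hT' ▸ hF'
  have hFrob := Frobenius.isGreatest_compl_range_mul_add_image hcop hd hF'T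
  rw [← hT] at hFrob
  exact hF.unique hFrob

/-- Brauer–Shockley recurrence for the Frobenius number: given `k + 1 ≥ 2`
numbers `n 0, …, n k`, if `d` divides `n 1, …, n k`, then
`f(n 0, n 1, …, n k) = d·f(n 0, n 1/d, …, n k/d) + n 0·(d-1)`, where the
Frobenius number is the largest natural number not expressible as a
nonnegative integer combination. -/
theorem stmt16 (k : ℕ) (hk : 1 ≤ k) (n : Fin (k + 1) → ℕ) (hn : ∀ i, 2 ≤ n i)
    (hgcd : Finset.univ.gcd n = 1)
    (d : ℕ) (hd : 1 ≤ d) (hdvd : ∀ i : Fin (k + 1), i ≠ 0 → d ∣ n i)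
    (hquot : ∀ i : Fin (k + 1), i ≠ 0 → 2 ≤ n i / d)
    (F F' : ℕ)
    (hF : IsGreatest {M : ℕ | ¬ ∃ x : Fin (k + 1) → ℕ, M = ∑ i, x i * n i} F)
    (hF' : IsGreatest
      {M : ℕ | ¬ ∃ x : Fin (k + 1) → ℕ,
        M = ∑ i, x i * (if i = 0 then n i else n i / d)} F') :
    F = d * F' + n 0 * (d - 1) :=
  stmt16_general k n hgcd d hd hdvd F F' hF hF'
end

section
/- Let G = PSL(2, 7), the quotient of SL(2, ℤ/7ℤ) by its center. Then every integer g ≥ 399 lies in sp(G), while 398 does not lie in sp(G); hence the stable upper genus of G equals 399. -/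
/-!
Riemann–Hurwitz reads `g - 1 = 168 (h - 1) + ∑ 84 (1 - 1/nⱼ)`, and every non-identity element of
`PSL(2, 7)` has order 2, 3, 4 or 7, so `g - 1 + 168` lies in `168ℕ + 42ℕ + 56ℕ + 63ℕ + 72ℕ`,
which does not contain `397 + 168 = 565`.

Conversely, with `h = 0`, a generating triple `x, y, (xy)⁻¹` followed by any list of non-identity
elements with product one realises a genus. The generating triples of signatures `(3,3,4)`,
`(2,4,7)`, `(3,7,7)` alone give `g - 1 = 7, 9, 32`, and appending pairs `x, x⁻¹` or further
triples raises `g - 1` by one of ten weights, among them `84`. So it suffices to check, by a finite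
computation, that each of the 84 values `398 ≤ g - 1 < 482` is `7`, `9` or `32` plus a sum of
weights. Generation comes from simplicity: a subgroup containing elements of orders 3, 4 and 7 has
index at most 2.
-/

open Matrix
open scoped MatrixGroups
open scoped commutatorElement

section BranchSums

variable (G : Type*) [Group G]

def branchSums : AddSubmonoid ℚ where
  carrier := {s | ∃ L : List G, (∀ x ∈ L, x ≠ 1) ∧ L.prod = 1 ∧
    (L.map fun x => 1 - 1 / (orderOf x : ℚ)).sum = s}
  zero_mem' := ⟨[], by simp⟩
  add_mem' := by
    rintro _ _ ⟨L, hL, hLprod, rfl⟩ ⟨M, hM, hMprod, rfl⟩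
    exact ⟨L ++ M, List.forall_mem_append.2 ⟨hL, hM⟩, by simp [hLprod, hMprod], by simp⟩

variable {G}

theorem ne_one_of_orderOf_eq {x : G} {n : ℕ} (hx : orderOf x = n) (hn : n ≠ 1) : x ≠ 1 :=
  fun h => hn (by rw [← hx, h, orderOf_one])

theorem forall_mem_triple_ne_one {x y : G} (hx : x ≠ 1) (hy : y ≠ 1) (hxy : x * y ≠ 1) :
    ∀ z ∈ [x, y, (x * y)⁻¹], z ≠ 1 :=
  List.forall_mem_cons.2 ⟨hx, List.forall_mem_cons.2 ⟨hy,
    List.forall_mem_singleton.2 (inv_ne_one.2 hxy)⟩⟩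

theorem two_mul_mem_branchSums {x : G} {a : ℕ} (hx : orderOf x = a) (ha : a ≠ 1) :
    2 * (1 - 1 / (a : ℚ)) ∈ branchSums G :=
  ⟨[x, x⁻¹], by simp [ne_one_of_orderOf_eq hx ha], by simp, by simp [hx]; ring⟩

theorem add_add_mem_branchSums {x y : G} {a b c : ℕ} (hx : orderOf x = a) (hy : orderOf y = b)
    (hxy : orderOf (x * y) = c) (ha : a ≠ 1) (hb : b ≠ 1) (hc : c ≠ 1) :
    (1 - 1 / (a : ℚ)) + (1 - 1 / (b : ℚ)) + (1 - 1 / (c : ℚ)) ∈ branchSums G := by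
  refine ⟨[x, y, (x * y)⁻¹], forall_mem_triple_ne_one (ne_one_of_orderOf_eq hx ha)
    (ne_one_of_orderOf_eq hy hb) (ne_one_of_orderOf_eq hxy hc), by simp, ?_⟩
  simp only [List.map_cons, List.map_nil, List.sum_cons, List.sum_nil, orderOf_inv, hx, hy, hxy]
  ring

theorem isGenus_of_list [Finite G] {L : List G} (hL : ∀ x ∈ L, x ≠ 1) (hprod : L.prod = 1)
    (hgen : Subgroup.closure {x | x ∈ L} = ⊤) {g : ℕ} (hg : 2 ≤ g)
    (hRH : 2 * ((g : ℚ) - 1) =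
      Nat.card G * (-2 + (L.map fun x => 1 - 1 / (orderOf x : ℚ)).sum)) :
    IsGenus G g := by
  refine ⟨hg, 0, L.length, fun j => orderOf (L.get j), Fin.elim0, Fin.elim0, L.get, fun j => ?_,
    fun _ => rfl, ?_, ?_, ?_⟩
  · exact (Nat.two_le_iff _).2
      ⟨(orderOf_pos _).ne', orderOf_eq_one_iff.not.2 (hL _ (List.get_mem _ _))⟩
  · simpa [Set.range_list_get] using hgen
  · simpa using hprod
  · rw [hRH, ← List.ofFn_getElem_eq_map, List.sum_ofFn]
    simp only [List.get_eq_getElem, Nat.cast_zero]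
    ring

theorem isGenus_of_closure_pair_eq_top [Finite G] {x y : G} {a b c : ℕ} (hx : orderOf x = a)
    (hy : orderOf y = b) (hxy : orderOf (x * y) = c) (ha : a ≠ 1) (hb : b ≠ 1) (hc : c ≠ 1)
    (hgen : Subgroup.closure {x, y} = ⊤) {s : ℚ} (hs : s ∈ branchSums G) {g : ℕ} (hg : 2 ≤ g)
    (hRH : 2 * ((g : ℚ) - 1) = Nat.card G *
      ((1 - 1 / (a : ℚ)) + (1 - 1 / (b : ℚ)) + (1 - 1 / (c : ℚ)) - 2 + s)) :
    IsGenus G g := by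
  obtain ⟨L, hL, hLprod, rfl⟩ := hs
  refine isGenus_of_list (L := [x, y, (x * y)⁻¹] ++ L) ?_ (by simp [hLprod]) ?_ hg ?_
  · exact List.forall_mem_append.2 ⟨forall_mem_triple_ne_one (ne_one_of_orderOf_eq hx ha)
      (ne_one_of_orderOf_eq hy hb) (ne_one_of_orderOf_eq hxy hc), hL⟩
  · exact eq_top_iff.2 (hgen ▸ Subgroup.closure_mono (by rintro z (rfl | rfl) <;> simp))
  · rw [hRH]
    simp only [List.map_append, List.sum_append, List.map_cons, List.map_nil, List.sum_cons,
      List.sum_nil, orderOf_inv, hx, hy, hxy]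
    ring

end BranchSums

theorem Subgroup.eq_top_of_index_dvd_two {G : Type*} [Group G] [IsSimpleGroup G]
    {H : Subgroup G} (hH : H ≠ ⊥) (h : H.index ∣ 2) : H = ⊤ := by
  rcases (Nat.dvd_prime Nat.prime_two).1 h with h1 | h2
  · exact Subgroup.index_eq_one.1 h1
  · have := Subgroup.normal_of_index_eq_two h2
    exact (IsSimpleGroup.eq_bot_or_eq_top_of_normal H this).resolve_left hH

section SumsTable

/-- Entry `i` of `sumsTable ws n` records whether `n - i` is a sum of elements of `ws`
(the table is stored from `n` down to `0`). -/
def sumsTable (ws : List ℕ) : ℕ → List Bool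
  | 0 => [true]
  | n + 1 =>
    let t := sumsTable ws n
    ws.any (fun w => w != 0 && t.getD (w - 1) false) :: t

theorem length_sumsTable (ws : List ℕ) (n : ℕ) : (sumsTable ws n).length = n + 1 := by
  induction n with
  | zero => rfl
  | succ n ih => simp [sumsTable, ih]

theorem sub_mem_closure_of_getD_sumsTable {ws : List ℕ} {n i : ℕ}
    (h : (sumsTable ws n).getD i false = true) :
    n - i ∈ AddSubmonoid.closure {w | w ∈ ws} := by
  induction n generalizing i with
  | zero =>
    cases i with
    | zero => exact zero_mem _
    | succ i => simp [sumsTable] at h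
  | succ n ih =>
    cases i with
    | zero =>
      simp only [sumsTable, List.getD_cons_zero, List.any_eq_true, Bool.and_eq_true,
        bne_iff_ne] at h
      obtain ⟨w, hw, hw0, hnw⟩ := h
      have hlt : w - 1 < n + 1 := by
        by_contra hge
        rw [List.getD_eq_default _ _ (by rw [length_sumsTable]; omega)] at hnw
        exact Bool.false_ne_true hnw
      have := add_mem (ih hnw) (AddSubmonoid.subset_closure hw)
      rwa [show n - (w - 1) + w = n + 1 - 0 by omega] at this
    | succ i =>
      simpa [sumsTable] using ih (i := i) (by simpa [sumsTable] using h)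

end SumsTable

instance : Fact (Nat.Prime 7) := ⟨by norm_num⟩

namespace PSL27

theorem mem_center_iff {x : SL(2, ZMod 7)} :
    x ∈ Subgroup.center SL(2, ZMod 7) ↔ x = 1 ∨ x = -1 := by
  rw [Matrix.SpecialLinearGroup.mem_center_iff, Fintype.card_fin]
  constructor
  · rintro ⟨r, hr, hx⟩
    have hr' : ∀ r : ZMod 7, r ^ 2 = 1 → r = 1 ∨ r = -1 := by decide
    rcases hr' r hr with rfl | rfl
    · exact .inl (Subtype.ext (by simp [← hx]))
    · exact .inr (Subtype.ext (by simp [← hx, map_neg]))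
  · rintro (rfl | rfl)
    · exact ⟨1, one_pow _, by simp⟩
    · exact ⟨-1, by norm_num, by rw [map_neg, map_one]; rfl⟩

set_option maxRecDepth 100000 in
theorem card_SL : Nat.card SL(2, ZMod 7) = 336 := by
  rw [Nat.card_eq_fintype_card]
  decide

theorem card_eq : Nat.card PSL(2, ZMod 7) = 168 := by
  have hcenter : Nat.card (Subgroup.center SL(2, ZMod 7)) = 2 := by
    have : (Subgroup.center SL(2, ZMod 7) : Set SL(2, ZMod 7)) = {1, -1} :=
      Set.ext fun _ => mem_center_iff
    rw [← SetLike.coe_sort_coe, this, Nat.card_coe_set_eq, Set.ncard_pair (by decide)]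
  have := Subgroup.card_eq_card_quotient_mul_card_subgroup (Subgroup.center SL(2, ZMod 7))
  rw [card_SL, hcenter] at this
  change Nat.card (SL(2, ZMod 7) ⧸ _) = 168
  omega

theorem coe_pow_eq_one_iff {x : SL(2, ZMod 7)} {m : ℕ} :
    (x : PSL(2, ZMod 7)) ^ m = 1 ↔ x ^ m = 1 ∨ x ^ m = -1 := by
  rw [← QuotientGroup.mk_pow, QuotientGroup.eq_one_iff, mem_center_iff]

theorem orderOf_coe_eq {x : SL(2, ZMod 7)} {n : ℕ} (hn : 0 < n)
    (h : (x ^ n = 1 ∨ x ^ n = -1) ∧ ∀ m < n, 0 < m → ¬(x ^ m = 1 ∨ x ^ m = -1)) :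
    orderOf (x : PSL(2, ZMod 7)) = n := by
  simpa only [orderOf_eq_iff hn, coe_pow_eq_one_iff, ne_eq] using h

set_option maxRecDepth 100000 in
theorem pow_eq_one_or_neg_one (x : SL(2, ZMod 7)) :
    (x ^ 3 = 1 ∨ x ^ 3 = -1) ∨ (x ^ 4 = 1 ∨ x ^ 4 = -1) ∨ (x ^ 7 = 1 ∨ x ^ 7 = -1) := by
  revert x
  decide

theorem orderOf_dvd (z : PSL(2, ZMod 7)) : orderOf z ∣ 3 ∨ orderOf z ∣ 4 ∨ orderOf z ∣ 7 := by
  obtain ⟨x, rfl⟩ := QuotientGroup.mk_surjective z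
  simpa only [orderOf_dvd_iff_pow_eq_one, coe_pow_eq_one_iff] using pow_eq_one_or_neg_one x

theorem orderOf_mem {z : PSL(2, ZMod 7)} (hz : z ≠ 1) :
    orderOf z ∈ ({2, 3, 4, 7} : Finset ℕ) := by
  have hsub : (Nat.divisors 3 ∪ Nat.divisors 4 ∪ Nat.divisors 7).erase 1 ⊆ {2, 3, 4, 7} := by
    decide
  apply hsub
  simpa [orderOf_eq_one_iff, hz] using orderOf_dvd z

theorem exists_mul_sum_eq {r : ℕ} {n : Fin r → ℕ} (hn : ∀ j, n j ∈ ({2, 3, 4, 7} : Finset ℕ)) :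
    ∃ A B C D : ℕ, 84 * ∑ j, (1 - 1 / (n j : ℚ)) = 42 * A + 56 * B + 63 * C + 72 * D := by
  rw [Finset.mul_sum]
  refine Finset.sum_induction _ (fun q : ℚ => ∃ A B C D : ℕ, q = 42 * A + 56 * B + 63 * C + 72 * D)
    ?_ ⟨0, 0, 0, 0, by norm_num⟩ fun j _ => ?_
  · rintro _ _ ⟨A, B, C, D, rfl⟩ ⟨A', B', C', D', rfl⟩
    exact ⟨A + A', B + B', C + C', D + D', by push_cast; ring⟩
  · have := hn j
    simp only [Finset.mem_insert, Finset.mem_singleton] at this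
    rcases this with h | h | h | h <;> rw [h]
    exacts [⟨1, 0, 0, 0, by norm_num⟩, ⟨0, 1, 0, 0, by norm_num⟩, ⟨0, 0, 1, 0, by norm_num⟩,
      ⟨0, 0, 0, 1, by norm_num⟩]

theorem not_isGenus_398 : ¬ IsGenus PSL(2, ZMod 7) 398 := by
  rintro ⟨-, h, r, n, -, -, c, hn2, hc, -, -, hRH⟩
  have hn : ∀ j, n j ∈ ({2, 3, 4, 7} : Finset ℕ) := fun j =>
    hc j ▸ orderOf_mem (ne_one_of_orderOf_eq (hc j) (by have := hn2 j; omega))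
  obtain ⟨A, B, C, D, hsum⟩ := exists_mul_sum_eq hn
  rw [card_eq] at hRH
  have : (565 : ℚ) = 168 * h + 42 * A + 56 * B + 63 * C + 72 * D := by linarith
  have : 565 = 168 * h + 42 * A + 56 * B + 63 * C + 72 * D := by exact_mod_cast this
  omega

instance : IsSimpleGroup PSL(2, ZMod 7) :=
  ProjectiveSpecialLinearGroup.rank_two_simple (by rw [Nat.card_zmod]; norm_num)

theorem eq_top_of_orderOf {H : Subgroup PSL(2, ZMod 7)} {u v w : PSL(2, ZMod 7)}
    (hu : u ∈ H) (hv : v ∈ H) (hw : w ∈ H)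
    (hu3 : orderOf u = 3) (hv4 : orderOf v = 4) (hw7 : orderOf w = 7) : H = ⊤ := by
  have hdvd : ∀ z ∈ H, orderOf z ∣ Nat.card H := fun z hz =>
    Subgroup.orderOf_coe (⟨z, hz⟩ : H) ▸ orderOf_dvd_natCard _
  obtain ⟨k, hk⟩ : 84 ∣ Nat.card H :=
    Nat.Coprime.mul_dvd_of_dvd_of_dvd (by norm_num)
      (Nat.Coprime.mul_dvd_of_dvd_of_dvd (by norm_num) (hu3 ▸ hdvd u hu) (hv4 ▸ hdvd v hv))
      (hw7 ▸ hdvd w hw)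
  have hindex := H.index_mul_card
  rw [card_eq, hk] at hindex
  refine Subgroup.eq_top_of_index_dvd_two ?_ ⟨k, by linarith⟩
  rintro rfl
  simp [Subgroup.mem_bot.1 hw] at hw7

theorem closure_coe_pair_eq_top {x y u v w : SL(2, ZMod 7)}
    (hu : u ∈ Subgroup.closure {x, y}) (hv : v ∈ Subgroup.closure {x, y})
    (hw : w ∈ Subgroup.closure {x, y}) (hu3 : orderOf (u : PSL(2, ZMod 7)) = 3)
    (hv4 : orderOf (v : PSL(2, ZMod 7)) = 4) (hw7 : orderOf (w : PSL(2, ZMod 7)) = 7) :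
    Subgroup.closure {(x : PSL(2, ZMod 7)), (y : PSL(2, ZMod 7))} = ⊤ := by
  have hmap : Subgroup.closure {(x : PSL(2, ZMod 7)), (y : PSL(2, ZMod 7))} =
      (Subgroup.closure {x, y}).map (QuotientGroup.mk' _) := by
    rw [MonoidHom.map_closure, Set.image_pair]; rfl
  rw [hmap]
  exact eq_top_of_orderOf (Subgroup.mem_map_of_mem _ hu) (Subgroup.mem_map_of_mem _ hv)
    (Subgroup.mem_map_of_mem _ hw) hu3 hv4 hw7

/-- The companion matrix of `X² - k X + 1`; the order of its image in `PSL(2, 7)` is `2, 3, 4, 7`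
according as `k` is `0`, `±1`, `±3`, `±2`. -/
def companion (k : ZMod 7) : SL(2, ZMod 7) := ⟨!![0, 1; -1, k], by simp [det_fin_two]⟩

theorem orderOf_companion_zero : orderOf (companion 0 : PSL(2, ZMod 7)) = 2 :=
  orderOf_coe_eq (by norm_num) (by decide)

theorem orderOf_companion_one : orderOf (companion 1 : PSL(2, ZMod 7)) = 3 :=
  orderOf_coe_eq (by norm_num) (by decide)

theorem orderOf_companion_two : orderOf (companion 2 : PSL(2, ZMod 7)) = 7 :=
  orderOf_coe_eq (by norm_num) (by decide)

theorem orderOf_companion_three : orderOf (companion 3 : PSL(2, ZMod 7)) = 4 :=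
  orderOf_coe_eq (by norm_num) (by decide)

theorem orderOf_companion_four : orderOf (companion 4 : PSL(2, ZMod 7)) = 4 :=
  orderOf_coe_eq (by norm_num) (by decide)

theorem orderOf_companion_five : orderOf (companion 5 : PSL(2, ZMod 7)) = 7 :=
  orderOf_coe_eq (by norm_num) (by decide)

theorem orderOf_companion_six : orderOf (companion 6 : PSL(2, ZMod 7)) = 3 :=
  orderOf_coe_eq (by norm_num) (by decide)

theorem orderOf_companion_one_mul_six :
    orderOf ((companion 1 : PSL(2, ZMod 7)) * companion 6) = 4 :=
  orderOf_coe_eq (x := companion 1 * companion 6) (by norm_num) (by decide)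

theorem orderOf_companion_zero_mul_three :
    orderOf ((companion 0 : PSL(2, ZMod 7)) * companion 3) = 7 :=
  orderOf_coe_eq (x := companion 0 * companion 3) (by norm_num) (by decide)

theorem orderOf_companion_two_mul_five :
    orderOf ((companion 2 : PSL(2, ZMod 7)) * companion 5) = 3 :=
  orderOf_coe_eq (x := companion 2 * companion 5) (by norm_num) (by decide)

theorem closure_companion_one_six :
    Subgroup.closure {(companion 1 : PSL(2, ZMod 7)), (companion 6 : PSL(2, ZMod 7))} = ⊤ :=
  have h1 := Subgroup.subset_closure (Set.mem_insert (companion 1) {companion 6})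
  have h6 := Subgroup.subset_closure
    (Set.mem_insert_of_mem (companion 1) (Set.mem_singleton (companion 6)))
  closure_coe_pair_eq_top h1 (mul_mem h1 h6) (mul_mem h1 (inv_mem h6)) orderOf_companion_one
    orderOf_companion_one_mul_six (orderOf_coe_eq (by norm_num) (by decide))

theorem closure_companion_zero_three :
    Subgroup.closure {(companion 0 : PSL(2, ZMod 7)), (companion 3 : PSL(2, ZMod 7))} = ⊤ :=
  have h0 := Subgroup.subset_closure (Set.mem_insert (companion 0) {companion 3})
  have h3 := Subgroup.subset_closure
    (Set.mem_insert_of_mem (companion 0) (Set.mem_singleton (companion 3)))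
  closure_coe_pair_eq_top (mul_mem (mul_mem h0 h3) h3) h3 (mul_mem h0 h3)
    (orderOf_coe_eq (by norm_num) (by decide)) orderOf_companion_three
    orderOf_companion_zero_mul_three

theorem closure_companion_two_five :
    Subgroup.closure {(companion 2 : PSL(2, ZMod 7)), (companion 5 : PSL(2, ZMod 7))} = ⊤ :=
  have h2 := Subgroup.subset_closure (Set.mem_insert (companion 2) {companion 5})
  have h5 := Subgroup.subset_closure
    (Set.mem_insert_of_mem (companion 2) (Set.mem_singleton (companion 5)))
  closure_coe_pair_eq_top (mul_mem h2 h5) (mul_mem (mul_mem h2 h2) h5) h2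
    orderOf_companion_two_mul_five (orderOf_coe_eq (by norm_num) (by decide))
    orderOf_companion_two

/-- `84 ∑ (1 - 1/n)` over the blocks `x, x⁻¹` (orders `2, 3, 4, 7`) and `x, y, (xy)⁻¹`
(signatures `(2,3,7)`, `(3,3,4)`, `(2,7,7)`, `(3,4,7)`, `(3,7,7)`, `(7,7,7)`). -/
def blockWeights : List ℕ := [84, 112, 126, 144, 170, 175, 186, 191, 200, 216]

def blockSums : AddSubmonoid ℕ := AddSubmonoid.closure {w | w ∈ blockWeights}

theorem div_mem_branchSums_of_mem_blockWeights {w : ℕ} (hw : w ∈ blockWeights) :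
    (w / 84 : ℚ) ∈ branchSums PSL(2, ZMod 7) := by
  simp only [blockWeights, List.mem_cons, List.not_mem_nil, or_false] at hw
  rcases hw with rfl | rfl | rfl | rfl | rfl | rfl | rfl | rfl | rfl | rfl
  · convert two_mul_mem_branchSums orderOf_companion_zero (by norm_num) using 1; norm_num
  · convert two_mul_mem_branchSums orderOf_companion_one (by norm_num) using 1; norm_num
  · convert two_mul_mem_branchSums orderOf_companion_three (by norm_num) using 1; norm_num
  · convert two_mul_mem_branchSums orderOf_companion_two (by norm_num) using 1; norm_num
  · convert add_add_mem_branchSums orderOf_companion_zero orderOf_companion_one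
      (orderOf_coe_eq (x := companion 0 * companion 1) (n := 7) (by norm_num) (by decide))
      (by norm_num) (by norm_num) (by norm_num) using 1
    norm_num
  · convert add_add_mem_branchSums orderOf_companion_one orderOf_companion_six
      orderOf_companion_one_mul_six (by norm_num) (by norm_num) (by norm_num) using 1
    norm_num
  · convert add_add_mem_branchSums orderOf_companion_zero orderOf_companion_two
      (orderOf_coe_eq (x := companion 0 * companion 2) (n := 7) (by norm_num) (by decide))
      (by norm_num) (by norm_num) (by norm_num) using 1
    norm_num
  · convert add_add_mem_branchSums orderOf_companion_one orderOf_companion_four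
      (orderOf_coe_eq (x := companion 1 * companion 4) (n := 7) (by norm_num) (by decide))
      (by norm_num) (by norm_num) (by norm_num) using 1
    norm_num
  · convert add_add_mem_branchSums orderOf_companion_two orderOf_companion_five
      orderOf_companion_two_mul_five (by norm_num) (by norm_num) (by norm_num) using 1
    norm_num
  · convert add_add_mem_branchSums orderOf_companion_two orderOf_companion_two
      (orderOf_coe_eq (x := companion 2 * companion 2) (n := 7) (by norm_num) (by decide))
      (by norm_num) (by norm_num) (by norm_num) using 1
    norm_num

theorem div_mem_branchSums_of_mem_blockSums {k : ℕ} (hk : k ∈ blockSums) :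
    (k / 84 : ℚ) ∈ branchSums PSL(2, ZMod 7) := by
  induction hk using AddSubmonoid.closure_induction with
  | mem w hw => exact div_mem_branchSums_of_mem_blockWeights hw
  | zero => simp
  | add a b _ _ ha hb => simpa [add_div] using add_mem ha hb

set_option maxRecDepth 10000 in
theorem getD_sumsTable_blockWeights : ∀ m < 482, 398 ≤ m → ∃ b ∈ [7, 9, 32],
    (sumsTable blockWeights 482).getD (482 - (m - b)) false = true := by
  decide

theorem exists_sub_mem_blockSums {m : ℕ} (hm : 398 ≤ m) :
    ∃ b ∈ [7, 9, 32], m - b ∈ blockSums := by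
  induction m using Nat.strong_induction_on with
  | _ m ih =>
  by_cases hm' : m < 482
  · obtain ⟨b, hb, h⟩ := getD_sumsTable_blockWeights m hm' hm
    refine ⟨b, hb, ?_⟩
    simpa [blockSums, Nat.sub_sub_self (show m - b ≤ 482 by omega)] using
      sub_mem_closure_of_getD_sumsTable h
  · obtain ⟨b, hb, h⟩ := ih (m - 84) (by omega) (by omega)
    have hb32 : b ≤ 32 := by simp only [List.mem_cons, List.not_mem_nil, or_false] at hb; omega
    refine ⟨b, hb, ?_⟩
    simpa [show m - 84 - b + 84 = m - b by omega] using
      add_mem h (AddSubmonoid.subset_closure (by simp [blockWeights]) : 84 ∈ blockSums)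

theorem isGenus_add_one_add {b k : ℕ} (hb : b ∈ [7, 9, 32]) (hk : k ∈ blockSums) :
    IsGenus PSL(2, ZMod 7) (b + 1 + k) := by
  have hs := div_mem_branchSums_of_mem_blockSums hk
  simp only [List.mem_cons, List.not_mem_nil, or_false] at hb
  rcases hb with rfl | rfl | rfl
  · refine isGenus_of_closure_pair_eq_top orderOf_companion_one orderOf_companion_six
      orderOf_companion_one_mul_six (by norm_num) (by norm_num) (by norm_num)
      closure_companion_one_six hs (by omega) ?_
    rw [card_eq]; push_cast; ring
  · refine isGenus_of_closure_pair_eq_top orderOf_companion_zero orderOf_companion_three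
      orderOf_companion_zero_mul_three (by norm_num) (by norm_num) (by norm_num)
      closure_companion_zero_three hs (by omega) ?_
    rw [card_eq]; push_cast; ring
  · refine isGenus_of_closure_pair_eq_top orderOf_companion_two orderOf_companion_five
      orderOf_companion_two_mul_five (by norm_num) (by norm_num) (by norm_num)
      closure_companion_two_five hs (by omega) ?_
    rw [card_eq]; push_cast; ring

end PSL27

/-- The stable upper genus of `PSL(2, 7)` equals `399`: every `g ≥ 399` is a
genus of `PSL(2, 7)`, while `398` is not. -/
theorem stmt19 :
    (∀ g : ℕ, 399 ≤ g → IsGenus (PSL(2, ZMod 7)) g) ∧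
      ¬ IsGenus (PSL(2, ZMod 7)) 398 := by
  refine ⟨fun g hg => ?_, PSL27.not_isGenus_398⟩
  obtain ⟨b, hb, hk⟩ := PSL27.exists_sub_mem_blockSums (m := g - 1) (by omega)
  have hb32 : b ≤ 32 := by simp only [List.mem_cons, List.not_mem_nil, or_false] at hb; omega
  simpa [show b + 1 + (g - 1 - b) = g by omega] using PSL27.isGenus_add_one_add hb hk
end
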